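/- arXiv:1407.0175 — 7 statements merged into one kernel-verified Lean document; each statement's English description precedes it below -/
import Mathlib

section
/- If Q is a structurally complete quasivariety, then every nontrivial algebra B in Q admits a homomorphism into some elementary extension of the free algebra F of denumerable rank for Q. -/
open FirstOrder Language

universe u

/-- A quasi-identity `∀ x̄ [⋀ i, lhs i ≐ rhs i → cl ≐ cr]` in `k` variables with `n` premises. -/
structure QuasiId (L : FirstOrder.Language.{u, u}) where
  k : ℕ
  n : ℕ
  lhs : Fin n → L.Term (Fin k)
  rhs : Fin n → L.Term (Fin k)
  cl : L.Term (Fin k)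
  cr : L.Term (Fin k)

variable {L : FirstOrder.Language.{u, u}}

/-- Satisfaction of a quasi-identity in an algebra. -/
def QuasiId.Holds (q : QuasiId L) (M : Type u) [L.Structure M] : Prop :=
  ∀ x : Fin q.k → M,
    (∀ i, (q.lhs i).realize x = (q.rhs i).realize x) →
      q.cl.realize x = q.cr.realize x

/-- Satisfiability of the premise of a quasi-identity in an algebra. -/
def QuasiId.PremiseSat (q : QuasiId L) (M : Type u) [L.Structure M] : Prop :=
  ∃ x : Fin q.k → M, ∀ i, (q.lhs i).realize x = (q.rhs i).realize x

/-- An identity `∀ x̄, lhs ≐ rhs`. -/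
structure EqId (L : FirstOrder.Language.{u, u}) where
  k : ℕ
  lhs : L.Term (Fin k)
  rhs : L.Term (Fin k)

def EqId.Holds (e : EqId L) (M : Type u) [L.Structure M] : Prop :=
  ∀ x : Fin e.k → M, e.lhs.realize x = e.rhs.realize x

/-- A quasivariety: a class of algebras axiomatized by a set of quasi-identities. -/
def IsQuasivariety (Q : ∀ M : Type u, L.Structure M → Prop) : Prop :=
  ∃ S : Set (QuasiId L), ∀ (M : Type u) (iM : L.Structure M),
    Q M iM ↔ ∀ q ∈ S, @QuasiId.Holds L q M iM

/-- A variety: a class of algebras axiomatized by a set of identities. -/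
def IsVariety (V : ∀ M : Type u, L.Structure M → Prop) : Prop :=
  ∃ S : Set (EqId L), ∀ (M : Type u) (iM : L.Structure M),
    V M iM ↔ ∀ e ∈ S, @EqId.Holds L e M iM

/-- `F` is free for the class `Q` over the denumerable set of free generators `g 0, g 1, …`. -/
def IsFreeAlgOn (Q : ∀ M : Type u, L.Structure M → Prop)
    (F : Type u) [iF : L.Structure F] (g : ℕ → F) : Prop :=
  Q F iF ∧ Function.Injective g ∧
    ∀ (A : Type u) (iA : L.Structure A), Q A iA → ∀ f : ℕ → A,
      ∃! h : @Language.Hom L F A iF iA, ∀ m, h.toFun (g m) = f m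

/-- Structural completeness: every quasi-identity true in the free algebra `F` holds in `Q`. -/
def IsSC (Q : ∀ M : Type u, L.Structure M → Prop) (F : Type u) [L.Structure F] : Prop :=
  ∀ q : QuasiId L, q.Holds F →
    ∀ (M : Type u) (iM : L.Structure M), Q M iM → @QuasiId.Holds L q M iM

/-- Almost structural completeness: every active (premise satisfiable in `F`) quasi-identity
true in the free algebra `F` holds in `Q`. -/
def IsASC (Q : ∀ M : Type u, L.Structure M → Prop) (F : Type u) [L.Structure F] : Prop :=
  ∀ q : QuasiId L, q.Holds F → q.PremiseSat F →
    ∀ (M : Type u) (iM : L.Structure M), Q M iM → @QuasiId.Holds L q M iM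

/-- An idempotent element: forms a one-element subalgebra. -/
def IsIdemElem (M : Type u) [L.Structure M] (e : M) : Prop :=
  ∀ (m : ℕ) (f : L.Functions m), Structure.funMap f (fun _ : Fin m => e) = e

/-- Some elementary extension of `F` contains an idempotent element. -/
def HasIdemElemExtension (F : Type u) [iF : L.Structure F] : Prop :=
  ∃ (G : Type u) (iG : L.Structure G),
    Nonempty (@Language.ElementaryEmbedding L F G iF iG) ∧ ∃ e : G, @IsIdemElem L G iG e

/-- `r` is a `Q`-congruence of `S`: the kernel of a homomorphism into a member of `Q`
(equivalently, a congruence with quotient in `Q`). -/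
def IsQCong (Q : ∀ M : Type u, L.Structure M → Prop) (S : Type u) [iS : L.Structure S]
    (r : S → S → Prop) : Prop :=
  ∃ (A : Type u) (iA : L.Structure A), Q A iA ∧
    ∃ h : @Language.Hom L S A iS iA, ∀ a b, r a b ↔ h.toFun a = h.toFun b

/-- `S` is `Q`-simple: nontrivial, in `Q`, and its only `Q`-congruences are equality and the
total relation. -/
def IsQSimple (Q : ∀ M : Type u, L.Structure M → Prop) (S : Type u) [iS : L.Structure S] : Prop :=
  Nontrivial S ∧ Q S iS ∧
    ∀ r : S → S → Prop, IsQCong Q S r → (∀ a b, r a b ↔ a = b) ∨ (∀ a b, r a b)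

/-- `S` is `Q`-subdirectly irreducible: equality is completely meet-irreducible among the
`Q`-congruences of `S`. -/
def IsQSubdirectlyIrreducible (Q : ∀ M : Type u, L.Structure M → Prop)
    (S : Type u) [iS : L.Structure S] : Prop :=
  Nontrivial S ∧ Q S iS ∧
    ∀ (ι : Type u) (R : ι → S → S → Prop), (∀ i, IsQCong Q S (R i)) →
      (∀ a b, ((∀ i, R i a b) ↔ a = b)) → ∃ i, ∀ a b, R i a b ↔ a = b

/-- `Q` is semisimple: all `Q`-subdirectly irreducible algebras are `Q`-simple. -/
def IsSemisimple (Q : ∀ M : Type u, L.Structure M → Prop) : Prop :=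
  ∀ (S : Type u) (iS : L.Structure S),
    @IsQSubdirectlyIrreducible L Q S iS → @IsQSimple L Q S iS

def SubclassOf (Q' Q : ∀ M : Type u, L.Structure M → Prop) : Prop :=
  ∀ (M : Type u) (iM : L.Structure M), Q' M iM → Q M iM

/-- A minimal quasivariety: nontrivial, and every subquasivariety is trivial or the whole class. -/
def IsMinimalQuasivariety (Q : ∀ M : Type u, L.Structure M → Prop) : Prop :=
  (∃ (M : Type u) (iM : L.Structure M), Q M iM ∧ Nontrivial M) ∧
    ∀ Q' : ∀ M : Type u, L.Structure M → Prop, IsQuasivariety Q' → SubclassOf Q' Q →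
      (∀ (M : Type u) (iM : L.Structure M), Q' M iM → Subsingleton M) ∨
        (∀ (M : Type u) (iM : L.Structure M), Q M iM ↔ Q' M iM)

/-- A minimal variety: nontrivial, and every subvariety is trivial or the whole class. -/
def IsMinimalVariety (V : ∀ M : Type u, L.Structure M → Prop) : Prop :=
  (∃ (M : Type u) (iM : L.Structure M), V M iM ∧ Nontrivial M) ∧
    ∀ V' : ∀ M : Type u, L.Structure M → Prop, IsVariety V' → SubclassOf V' V →
      (∀ (M : Type u) (iM : L.Structure M), V' M iM → Subsingleton M) ∨
        (∀ (M : Type u) (iM : L.Structure M), V M iM ↔ V' M iM)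

/-- `t` interprets as the discriminator operation on `M`. -/
def IsDiscrTermOn (t : L.Term (Fin 3)) (M : Type u) [L.Structure M] : Prop :=
  ∀ a b c : M, (a ≠ b → t.realize ![a, b, c] = a) ∧ (a = b → t.realize ![a, b, c] = c)

/-- `V` is the variety generated by the class `K`. -/
def IsVarietyGeneratedBy (V K : ∀ M : Type u, L.Structure M → Prop) : Prop :=
  IsVariety V ∧ SubclassOf K V ∧ ∀ W, IsVariety W → SubclassOf K W → SubclassOf V W

/-- A discriminator variety: generated by a class of algebras with a common discriminator term. -/
def IsDiscriminatorVariety (V : ∀ M : Type u, L.Structure M → Prop) : Prop :=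
  ∃ (K : ∀ M : Type u, L.Structure M → Prop) (t : L.Term (Fin 3)),
    (∀ (M : Type u) (iM : L.Structure M), K M iM → @IsDiscrTermOn L t M iM) ∧
      IsVarietyGeneratedBy V K

/-- A congruence of an algebra. -/
def IsCongruence (M : Type u) [L.Structure M] (r : M → M → Prop) : Prop :=
  Equivalence r ∧ ∀ (m : ℕ) (f : L.Functions m) (a b : Fin m → M),
    (∀ i, r (a i) (b i)) → r (Structure.funMap f a) (Structure.funMap f b)

/-- A simple algebra: nontrivial with only trivial congruences. -/
def IsSimpleAlg (M : Type u) [L.Structure M] : Prop :=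
  Nontrivial M ∧ ∀ r : M → M → Prop, IsCongruence (L := L) M r →
    (∀ a b, r a b ↔ a = b) ∨ (∀ a b, r a b)

/-- `P` is `Q`-finitely presented: presented in `Q` by finitely many generators `v` and
finitely many relations `lhs i ≐ rhs i`. -/
def IsQFinPresented (Q : ∀ M : Type u, L.Structure M → Prop)
    (P : Type u) [iP : L.Structure P] : Prop :=
  Q P iP ∧ ∃ (k n : ℕ) (lhs rhs : Fin n → L.Term (Fin k)) (v : Fin k → P),
    (∀ i, (lhs i).realize v = (rhs i).realize v) ∧
    ∀ (A : Type u) (iA : L.Structure A), Q A iA → ∀ x : Fin k → A,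
      (∀ i, @Term.realize L A iA (Fin k) x (lhs i) = @Term.realize L A iA (Fin k) x (rhs i)) →
        ∃! h : @Language.Hom L P A iP iA, ∀ j, h.toFun (v j) = x j

/-- The coordinatewise structure on a direct product of algebras. -/
def piStruct {ι : Type u} {M : ι → Type u} (iM : ∀ i, L.Structure (M i)) :
    L.Structure (∀ i, M i) where
  funMap := fun {m} f x i => @Structure.funMap L (M i) (iM i) m f (fun j => x j i)
  RelMap := fun {m} r x => ∀ i, @Structure.RelMap L (M i) (iM i) m r (fun j => x j i)

instance piStructure {ι : Type u} {M : ι → Type u} [∀ i, L.Structure (M i)] :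
    L.Structure (∀ i, M i) :=
  piStruct fun i => inferInstance

/-!
If `B` satisfies every quasi-identity of `F` and `b₀ ≠ b₁` in `B`, then every finite fragment of
the operation table of `B` is realized in `F`: otherwise the quasi-identity "this fragment implies
`b₀ = b₁`" would hold vacuously in `F`, hence in `B`, where it fails. Choosing a realization
`x_s : B → F` of each finite fragment `s` and an ultrafilter on fragments containing every cone
`{s | s₀ ⊆ s}`, the maps `x_s` glue to a homomorphism from `B` into an ultrapower of `F`; the
diagonal embedding of `F` into its ultrapower is elementary by Łoś's theorem.
-/

open Filter

namespace FirstOrder.Language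

structure FunApp (L : Language.{u, u}) (B : Type*) where
  {arity : ℕ}
  f : L.Functions arity
  args : Fin arity → B

namespace FunApp

variable {B M : Type*} [L.Structure B] [L.Structure M]

def value (c : FunApp L B) : B :=
  Structure.funMap c.f c.args

def support [DecidableEq B] (c : FunApp L B) : Finset B :=
  insert c.value (Finset.univ.image c.args)

def RespectedBy (c : FunApp L B) (x : B → M) : Prop :=
  Structure.funMap c.f (x ∘ c.args) = x c.value

end FunApp

namespace Ultraproduct

variable {ι : Type*} (U : Ultrafilter ι)

def diagonal (M : Type*) [L.Structure M] [Nonempty M] :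
    M ↪ₑ[L] (U : Filter ι).Product fun _ => M where
  toFun a := ((fun _ => a : ι → M) : (U : Filter ι).Product fun _ => M)
  map_formula' _ φ v := (realize_formula_cast φ fun i _ => v i).trans eventually_const

def homOfEventuallyRespectedBy [L.IsAlgebraic] {B M : Type*} [L.Structure B] [L.Structure M]
    (x : ι → B → M) (hx : ∀ c : FunApp L B, ∀ᶠ i in U, c.RespectedBy (x i)) :
    B →[L] (U : Filter ι).Product fun _ => M where
  toFun b := ((fun i => x i b : ι → M) : (U : Filter ι).Product fun _ => M)
  map_fun' f b := by
    refine Eq.trans ?_ (funMap_cast f fun j i => x i (b j)).symm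
    exact Quotient.sound' ((hx ⟨f, b⟩).mono fun i hi => hi.symm)
  map_rel' r := isEmptyElim r

end Ultraproduct

end FirstOrder.Language

namespace QuasiId

variable {α β : Type*} [Fintype α] [Fintype β]

noncomputable def ofFintype (lhs rhs : β → L.Term α) (cl cr : L.Term α) : QuasiId L where
  k := Fintype.card α
  n := Fintype.card β
  lhs i := (lhs ((Fintype.equivFin β).symm i)).relabel (Fintype.equivFin α)
  rhs i := (rhs ((Fintype.equivFin β).symm i)).relabel (Fintype.equivFin α)
  cl := cl.relabel (Fintype.equivFin α)
  cr := cr.relabel (Fintype.equivFin α)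

theorem holds_ofFintype_iff {lhs rhs : β → L.Term α} {cl cr : L.Term α} {M : Type u}
    [L.Structure M] :
    (ofFintype lhs rhs cl cr).Holds M ↔ ∀ x : α → M,
      (∀ j, (lhs j).realize x = (rhs j).realize x) → cl.realize x = cr.realize x := by
  simp only [Holds, ofFintype, Term.realize_relabel]
  have hsurj : Function.Surjective fun x : α → M => x ∘ (Fintype.equivFin α).symm :=
    fun y => ⟨y ∘ Fintype.equivFin α, by simp [Function.comp_assoc]⟩
  rw [hsurj.forall]
  simp only [Function.comp_assoc, Equiv.symm_comp_self, Function.comp_id]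
  refine forall_congr' fun x => imp_congr ?_ Iff.rfl
  exact ((Fintype.equivFin β).symm.surjective.forall
    (p := fun j => (lhs j).realize x = (rhs j).realize x)).symm

end QuasiId

theorem exists_respectedBy_of_forall_holds {B M : Type u} [L.Structure B] [L.Structure M]
    [Nontrivial B] (h : ∀ q : QuasiId L, q.Holds M → q.Holds B) (s : Finset (FunApp L B)) :
    ∃ x : B → M, ∀ c ∈ s, c.RespectedBy x := by
  classical
  obtain ⟨b₀, b₁, hb⟩ := exists_pair_ne B
  set A : Finset B := insert b₀ (insert b₁ (s.biUnion FunApp.support))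
  have hb₀ : b₀ ∈ A := Finset.mem_insert_self _ _
  have hb₁ : b₁ ∈ A := Finset.mem_insert_of_mem (Finset.mem_insert_self _ _)
  have hsupp : ∀ c ∈ s, c.support ⊆ A := fun c hc =>
    (Finset.subset_biUnion_of_mem _ hc).trans
      ((Finset.subset_insert _ _).trans (Finset.subset_insert _ _))
  have hvalue : ∀ c ∈ s, c.value ∈ A := fun c hc => hsupp c hc (Finset.mem_insert_self _ _)
  have hargs : ∀ c ∈ s, ∀ j, c.args j ∈ A := fun c hc j =>
    hsupp c hc (Finset.mem_insert_of_mem (Finset.mem_image_of_mem _ (Finset.mem_univ j)))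
  let lhs : s → L.Term A := fun c =>
    Term.func c.1.f fun j => Term.var ⟨c.1.args j, hargs c.1 c.2 j⟩
  let rhs : s → L.Term A := fun c => Term.var ⟨c.1.value, hvalue c.1 c.2⟩
  obtain ⟨y, hy⟩ : ∃ y : A → M, ∀ c, (lhs c).realize y = (rhs c).realize y := by
    by_contra! hno
    have hq := h (QuasiId.ofFintype lhs rhs (Term.var ⟨b₀, hb₀⟩) (Term.var ⟨b₁, hb₁⟩))
      (QuasiId.holds_ofFintype_iff.2 fun y hy => absurd hy (by simpa using hno y))
    exact hb (QuasiId.holds_ofFintype_iff.1 hq Subtype.val fun c => rfl)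
  set x : B → M := Function.extend Subtype.val y fun _ => y ⟨b₀, hb₀⟩
  have hx : ∀ b (hb : b ∈ A), x b = y ⟨b, hb⟩ := fun b hb =>
    Subtype.val_injective.extend_apply y _ ⟨b, hb⟩
  refine ⟨x, fun c hc => ?_⟩
  simp only [FunApp.RespectedBy, Function.comp_def, hx _ (hargs c hc _), hx _ (hvalue c hc)]
  exact hy ⟨c, hc⟩

theorem stmt_0_general {L : FirstOrder.Language.{u, u}} [L.IsAlgebraic]
    (Q : ∀ M : Type u, L.Structure M → Prop)
    (F : Type u) [iF : L.Structure F]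
    (hSC : IsSC Q F)
    (B : Type u) [iB : L.Structure B] (hQB : Q B iB) (hB : Nontrivial B) :
    ∃ (G : Type u) (iG : L.Structure G),
      Nonempty (@FirstOrder.Language.ElementaryEmbedding L F G iF iG) ∧
        Nonempty (@FirstOrder.Language.Hom L B G iB iG) := by
  have hBF : ∀ q : QuasiId L, q.Holds F → q.Holds B := fun q hq => hSC q hq B iB hQB
  choose x hx using exists_respectedBy_of_forall_holds hBF
  obtain ⟨b⟩ := hB.to_nonempty
  have : Nonempty F := ⟨x ∅ b⟩
  let U := Ultrafilter.of (atTop : Filter (Finset (FunApp L B)))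
  refine ⟨_, _, ⟨Ultraproduct.diagonal U F⟩,
    ⟨Ultraproduct.homOfEventuallyRespectedBy U x fun c => ?_⟩⟩
  have hc : ∀ᶠ s in atTop, c ∈ s :=
    (eventually_ge_atTop {c}).mono fun s hs => Finset.singleton_subset_iff.1 hs
  exact (hc.mono fun s hs => hx s c hs).filter_mono (Ultrafilter.of_le _)

theorem stmt_0 {L : FirstOrder.Language.{u, u}} [L.IsAlgebraic]
    (Q : ∀ M : Type u, L.Structure M → Prop) (hQ : IsQuasivariety Q)
    (F : Type u) [iF : L.Structure F] (g : ℕ → F) (hF : IsFreeAlgOn Q F g)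
    (hSC : IsSC Q F)
    (B : Type u) [iB : L.Structure B] (hQB : Q B iB) (hB : Nontrivial B) :
    ∃ (G : Type u) (iG : L.Structure G),
      Nonempty (@FirstOrder.Language.ElementaryEmbedding L F G iF iG) ∧
        Nonempty (@FirstOrder.Language.Hom L B G iB iG) :=
  stmt_0_general Q F (iF := iF) hSC B (iB := iB) hQB hB
end

section
/- Let Q be an almost structurally complete quasivariety with denumerably generated free algebra F. Then the following are equivalent: (1) Q is structurally complete; (2) every nontrivial algebra in Q admits a homomorphism into some elementary extension of F; (3) every nontrivial Q-finitely presented algebra admits a homomorphism into F. -/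
open FirstOrder Language

universe u

variable {L : FirstOrder.Language.{u, u}}

/-!
(1 ⇒ 2) Under structural completeness, a finite system of equations solvable in a nontrivial
`B ∈ Q` is solvable in `F`: otherwise the quasi-identity "system → y = z" holds in `F`, hence in
`B`, which forces `B` to be trivial. Applied to the finite fragments of the operation table of `B`
this gives maps `B → F` that are homomorphic on each fragment; along an ultrafilter they glue to
a homomorphism into an ultrapower of `F`, an elementary extension of `F`.

(2 ⇒ 3) For a finitely presented `P`, solvability of its relations is an existential sentence.
It holds in an elementary extension of `F` receiving `P`, hence in `F`, and the universal
property of `P` yields `P → F`.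

(3 ⇒ 1) By almost structural completeness only passive quasi-identities need checking. The
algebra presented by a passive premise admits no homomorphism into `F`, so by (3) it is trivial,
and then every solution of the premise in a member of `Q` satisfies the conclusion.
-/

open Structure

namespace FirstOrder.Language.Term

/-- Relations are interpreted as empty: quasi-identities only involve equations. -/
instance instStructure {α : Type*} : L.Structure (L.Term α) where
  funMap := Term.func
  RelMap _ _ := False

theorem realize_eq_subst {α β : Type*} (σ : β → L.Term α) (t : L.Term β) :
    t.realize σ = t.subst σ := by
  induction t with
  | var => rfl
  | func f _ ih => exact congrArg (Term.func f) (funext ih)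

theorem subst_var {α : Type*} (t : L.Term α) : t.subst Term.var = t := by
  induction t with
  | var => rfl
  | func f _ ih => exact congrArg (Term.func f) (funext ih)

end FirstOrder.Language.Term

section Presented

variable (Q : ∀ M : Type u, L.Structure M → Prop) {α : Type} {ι : Type*}
  (lhs rhs : ι → L.Term α)

def presentation : Setoid (L.Term α) where
  r t s := ∀ (B : Type u) (iB : L.Structure B), Q B iB → ∀ x : α → B,
    (∀ i, (lhs i).realize x = (rhs i).realize x) → t.realize x = s.realize x
  iseqv :=
    ⟨fun _ _ _ _ _ _ => rfl, fun h B iB hB x hx => (h B iB hB x hx).symm,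
      fun h h' B iB hB x hx => (h B iB hB x hx).trans (h' B iB hB x hx)⟩

instance : L.Prestructure (presentation Q lhs rhs) where
  toStructure := Term.instStructure
  fun_equiv {_ f} _ _ h B iB hB x hx :=
    congrArg (funMap f) (funext fun i => h i B iB hB x hx)
  rel_equiv _ _ _ := rfl

/-- The algebra `P_φ` presented in `Q` by generators `α` and relations `lhs i = rhs i`. -/
abbrev Presented : Type u := Quotient (presentation Q lhs rhs)

namespace Presented

variable {Q lhs rhs}

theorem exists_eq_mk {β : Type*} (y : β → Presented Q lhs rhs) :
    ∃ σ : β → L.Term α, y = fun j => ⟦σ j⟧ :=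
  ⟨fun j => (y j).out, funext fun j => (Quotient.out_eq (y j)).symm⟩

theorem realize_mk {β : Type*} (σ : β → L.Term α) (t : L.Term β) :
    t.realize (fun j => (⟦σ j⟧ : Presented Q lhs rhs)) = ⟦t.subst σ⟧ := by
  rw [Term.realize_quotient_mk', Term.realize_eq_subst]

variable (Q lhs rhs) in
def gen (a : α) : Presented Q lhs rhs := ⟦Term.var a⟧

theorem realize_gen (t : L.Term α) : t.realize (gen Q lhs rhs) = ⟦t⟧ :=
  (realize_mk Term.var t).trans (congrArg _ t.subst_var)

theorem quasiId_holds (q : QuasiId L)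
    (hq : ∀ (B : Type u) (iB : L.Structure B), Q B iB → q.Holds B) :
    q.Holds (Presented Q lhs rhs) := by
  intro y hy
  obtain ⟨σ, rfl⟩ := exists_eq_mk y
  simp only [realize_mk, Quotient.eq] at hy ⊢
  intro B iB hB x hx
  rw [Term.realize_subst, Term.realize_subst]
  refine hq B iB hB _ fun i => ?_
  simpa only [Term.realize_subst] using hy i B iB hB x hx

theorem mem_of_isQuasivariety (hQ : IsQuasivariety Q) :
    Q (Presented Q lhs rhs) inferInstance := by
  obtain ⟨S, hS⟩ := hQ
  exact (hS _ _).2 fun q hq => quasiId_holds q fun B iB hB => (hS B iB).1 hB q hq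

theorem gen_solves (i : ι) :
    (lhs i).realize (gen Q lhs rhs) = (rhs i).realize (gen Q lhs rhs) := by
  rw [realize_gen, realize_gen]
  exact Quotient.sound fun _ _ _ _ hx => hx i

variable {B : Type u} [iB : L.Structure B]

def lift (hB : Q B iB) (x : α → B) (hx : ∀ i, (lhs i).realize x = (rhs i).realize x) :
    Presented Q lhs rhs →[L] B where
  toFun := Quotient.lift (fun t => t.realize x) fun _ _ h => h B iB hB x hx
  map_fun' {_} f ys := by
    obtain ⟨ts, rfl⟩ := exists_eq_mk ys
    rw [funMap_quotient_mk']
    rfl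
  map_rel' {_} r ys := by
    obtain ⟨ts, rfl⟩ := exists_eq_mk ys
    rw [relMap_quotient_mk']
    exact False.elim

theorem hom_ext {φ ψ : Presented Q lhs rhs →[L] B}
    (h : ∀ a, φ (gen Q lhs rhs a) = ψ (gen Q lhs rhs a)) : φ = ψ := by
  ext p
  induction p using Quotient.inductionOn with
  | h t =>
    rw [← realize_gen, ← HomClass.realize_term, ← HomClass.realize_term]
    exact congrArg (t.realize ·) (funext h)

end Presented

variable {Q} in
theorem isQFinPresented_presented (hQ : IsQuasivariety Q) {k n : ℕ}
    (lhs rhs : Fin n → L.Term (Fin k)) : IsQFinPresented Q (Presented Q lhs rhs) :=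
  ⟨Presented.mem_of_isQuasivariety hQ, k, n, lhs, rhs, Presented.gen Q lhs rhs,
    Presented.gen_solves, fun _ _ hA x hx =>
      ⟨Presented.lift hA x hx, fun _ => rfl, fun _ hφ => Presented.hom_ext hφ⟩⟩

end Presented

theorem FirstOrder.Language.ElementaryEmbedding.exists_solution_of_exists_solution
    {M N : Type*} [L.Structure M] [L.Structure N] (e : M ↪ₑ[L] N) {α ι : Type*} [Finite α]
    [Finite ι] (lhs rhs : ι → L.Term α)
    (h : ∃ x : α → N, ∀ i, (lhs i).realize x = (rhs i).realize x) :
    ∃ x : α → M, ∀ i, (lhs i).realize x = (rhs i).realize x := by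
  let φ : L.Formula Empty := Formula.iExs α <|
    Formula.iInf fun i => ((lhs i).relabel Sum.inr).equal ((rhs i).relabel Sum.inr)
  have hN : φ.Realize (e ∘ default) := by
    simpa only [φ, Formula.realize_iExs, Formula.realize_iInf, Formula.realize_equal,
      Term.realize_relabel, Sum.elim_comp_inr] using h
  simpa only [φ, Formula.realize_iExs, Formula.realize_iInf, Formula.realize_equal,
    Term.realize_relabel, Sum.elim_comp_inr] using (e.map_formula φ default).1 hN

namespace QuasiId

variable {k n : ℕ}

def collapse (lhs rhs : Fin n → L.Term (Fin k)) : QuasiId L where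
  k := k + 2
  n := n
  lhs i := (lhs i).relabel (Fin.castAdd 2)
  rhs i := (rhs i).relabel (Fin.castAdd 2)
  cl := Term.var (Fin.natAdd k 0)
  cr := Term.var (Fin.natAdd k 1)

theorem holds_collapse_iff (lhs rhs : Fin n → L.Term (Fin k)) (M : Type u) [L.Structure M] :
    (collapse lhs rhs).Holds M ↔
      ((∃ x : Fin k → M, ∀ i, (lhs i).realize x = (rhs i).realize x) → Subsingleton M) := by
  constructor
  · rintro h ⟨x, hx⟩
    refine ⟨fun a b => ?_⟩
    have hx' : Fin.append x ![a, b] ∘ Fin.castAdd 2 = x := funext fun j => Fin.append_left _ _ j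
    have := h (Fin.append x ![a, b]) fun i =>
      Term.realize_relabel.trans ((hx' ▸ hx i).trans Term.realize_relabel.symm)
    simpa [collapse] using this
  · intro h z hz
    have : Subsingleton M := h ⟨z ∘ Fin.castAdd 2, fun i =>
      Term.realize_relabel.symm.trans ((hz i).trans Term.realize_relabel)⟩
    exact Subsingleton.elim _ _

end QuasiId

abbrev OpEntry (L : FirstOrder.Language.{u, u}) (B : Type u) : Type u :=
  Σ m, L.Functions m × (Fin m → B)

namespace Ultrapower

variable {ι : Type u} (U : Ultrafilter ι) (F : Type u) [L.Structure F]

noncomputable def diagonal [Nonempty F] : F ↪ₑ[L] (U : Filter ι).Product fun _ => F where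
  toFun a := ((fun _ => a : ι → F) : (U : Filter ι).Product fun _ => F)
  map_formula' {_} φ v := by
    change φ.Realize (fun j => ((fun _ => v j : ι → F) : (U : Filter ι).Product fun _ => F))
      ↔ _
    rw [Ultraproduct.realize_formula_cast (x := fun j _ => v j), Filter.eventually_const]

variable {F}

theorem exists_hom_of_forall_finset [L.IsAlgebraic] {B : Type u} [L.Structure B]
    (h : ∀ D : Finset (OpEntry L B),
      ∃ y : B → F, ∀ d ∈ D, y (funMap d.2.1 d.2.2) = funMap d.2.1 (y ∘ d.2.2)) :
    ∃ (I : Type u) (U : Ultrafilter I),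
      Nonempty (B →[L] (U : Filter I).Product fun _ => F) := by
  choose y hy using h
  let U := Ultrafilter.of (Filter.atTop : Filter (Finset (OpEntry L B)))
  have eventually_mem : ∀ d, ∀ᶠ D in (U : Filter (Finset (OpEntry L B))), d ∈ D := fun d =>
    Ultrafilter.of_le _ ((Filter.eventually_ge_atTop {d}).mono fun _ hD =>
      Finset.singleton_subset_iff.1 hD)
  refine ⟨_, U, ⟨{
    toFun := fun b =>
      ((fun D => y D b : _ → F) : (U : Filter (Finset (OpEntry L B))).Product fun _ => F)
    map_fun' := fun {m} f xs => ?_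
    map_rel' := fun {_} r => isEmptyElim r }⟩⟩
  exact (Quotient.sound' ((eventually_mem ⟨m, f, xs⟩).mono fun D hD => hy D _ hD)).trans
    (Ultraproduct.funMap_cast f fun j D => y D (xs j)).symm

end Ultrapower

namespace IsSC

variable {Q : ∀ M : Type u, L.Structure M → Prop} {F : Type u} [L.Structure F]
  {B : Type u} [iB : L.Structure B]

theorem exists_solution (hSC : IsSC Q F) (hB : Q B iB) [Nontrivial B] {α ι : Type*} [Finite α]
    [Finite ι] (lhs rhs : ι → L.Term α) (x : α → B)
    (hx : ∀ i, (lhs i).realize x = (rhs i).realize x) :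
    ∃ y : α → F, ∀ i, (lhs i).realize y = (rhs i).realize y := by
  obtain ⟨k, ⟨eα⟩⟩ := Finite.exists_equiv_fin α
  obtain ⟨n, ⟨eι⟩⟩ := Finite.exists_equiv_fin ι
  let lhs' : Fin n → L.Term (Fin k) := fun j => (lhs (eι.symm j)).relabel eα
  let rhs' : Fin n → L.Term (Fin k) := fun j => (rhs (eι.symm j)).relabel eα
  by_contra hF
  have hcollapse : (QuasiId.collapse lhs' rhs').Holds F := by
    refine (QuasiId.holds_collapse_iff lhs' rhs' F).2 fun ⟨y, hy⟩ =>
      absurd ⟨y ∘ eα, fun i => ?_⟩ hF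
    simpa [lhs', rhs', Term.realize_relabel] using hy (eι i)
  refine not_subsingleton B <| (QuasiId.holds_collapse_iff lhs' rhs' B).1
    (hSC _ hcollapse B iB hB) ⟨x ∘ eα.symm, fun j => ?_⟩
  simpa [lhs', rhs', Term.realize_relabel, Function.comp_assoc] using hx (eι.symm j)

theorem exists_map_respecting (hSC : IsSC Q F) (hB : Q B iB) [Nontrivial B] [Nonempty F]
    (D : Finset (OpEntry L B)) :
    ∃ y : B → F, ∀ d ∈ D, y (funMap d.2.1 d.2.2) = funMap d.2.1 (y ∘ d.2.2) := by
  classical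
  let s := D.biUnion fun d => insert (funMap d.2.1 d.2.2) (Finset.univ.image d.2.2)
  have arg_mem : ∀ d ∈ D, ∀ j, d.2.2 j ∈ s := fun d hd j =>
    Finset.mem_biUnion.2 ⟨d, hd, Finset.mem_insert_of_mem (Finset.mem_image_of_mem _ (by simp))⟩
  have val_mem : ∀ d ∈ D, funMap d.2.1 d.2.2 ∈ s := fun d hd =>
    Finset.mem_biUnion.2 ⟨d, hd, Finset.mem_insert_self _ _⟩
  obtain ⟨y, hy⟩ := hSC.exists_solution hB
    (fun d : D => Term.func d.1.2.1 fun j => Term.var ⟨d.1.2.2 j, arg_mem _ d.2 j⟩)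
    (fun d : D => Term.var ⟨funMap d.1.2.1 d.1.2.2, val_mem _ d.2⟩) Subtype.val fun _ => rfl
  let z : B → F := Function.extend Subtype.val y fun _ => Classical.arbitrary F
  have z_eq : ∀ b (hb : b ∈ s), z b = y ⟨b, hb⟩ :=
    fun b hb => Subtype.val_injective.extend_apply y _ ⟨b, hb⟩
  refine ⟨z, fun d hd => ?_⟩
  rw [z_eq _ (val_mem d hd)]
  exact (hy ⟨d, hd⟩).symm.trans
    (congrArg (funMap d.2.1) (funext fun j => (z_eq _ (arg_mem d hd j)).symm))

theorem exists_elementaryEmbedding_hom [L.IsAlgebraic] (hSC : IsSC Q F) [Nonempty F]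
    (hB : Q B iB) [Nontrivial B] :
    ∃ (G : Type u) (_ : L.Structure G), Nonempty (F ↪ₑ[L] G) ∧ Nonempty (B →[L] G) := by
  obtain ⟨I, U, hom⟩ := Ultrapower.exists_hom_of_forall_finset (hSC.exists_map_respecting hB)
  exact ⟨_, inferInstance, ⟨Ultrapower.diagonal U F⟩, hom⟩

end IsSC

theorem nonempty_hom_of_isQFinPresented {Q : ∀ M : Type u, L.Structure M → Prop}
    {F G P : Type u} [iF : L.Structure F] [L.Structure G] [L.Structure P] (hQF : Q F iF)
    (e : F ↪ₑ[L] G) (hP : IsQFinPresented Q P) (φ : P →[L] G) : Nonempty (P →[L] F) := by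
  obtain ⟨-, k, n, lhs, rhs, v, hv, lift⟩ := hP
  obtain ⟨x, hx⟩ := e.exists_solution_of_exists_solution lhs rhs
    ⟨φ ∘ v, fun i => by rw [HomClass.realize_term, HomClass.realize_term, hv i]⟩
  obtain ⟨ψ, -, -⟩ := lift F iF hQF x hx
  exact ⟨ψ⟩

theorem isSC_of_forall_nonempty_hom {Q : ∀ M : Type u, L.Structure M → Prop} {F : Type u}
    [L.Structure F] (hQ : IsQuasivariety Q) (hASC : IsASC Q F)
    (h : ∀ (P : Type u) [L.Structure P], IsQFinPresented Q P → Nontrivial P →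
      Nonempty (P →[L] F)) :
    IsSC Q F := by
  intro q hqF M iM hM
  by_cases hsat : q.PremiseSat F
  · exact hASC q hqF hsat M iM hM
  rcases subsingleton_or_nontrivial (Presented Q q.lhs q.rhs) with hP | hP
  · have : (⟦q.cl⟧ : Presented Q q.lhs q.rhs) = ⟦q.cr⟧ := Subsingleton.elim _ _
    exact Quotient.exact this M iM hM
  · obtain ⟨φ⟩ := h _ (isQFinPresented_presented hQ q.lhs q.rhs) hP
    refine absurd ⟨φ ∘ Presented.gen Q q.lhs q.rhs, fun i => ?_⟩ hsat
    rw [HomClass.realize_term, HomClass.realize_term, Presented.gen_solves]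

theorem stmt_1 {L : FirstOrder.Language.{u, u}} [L.IsAlgebraic]
    (Q : ∀ M : Type u, L.Structure M → Prop) (hQ : IsQuasivariety Q)
    (F : Type u) [iF : L.Structure F] (g : ℕ → F) (hF : IsFreeAlgOn Q F g)
    (hASC : IsASC Q F) :
    (IsSC Q F ↔
      ∀ (B : Type u) (iB : L.Structure B), Q B iB → Nontrivial B →
        ∃ (G : Type u) (iG : L.Structure G),
          Nonempty (@FirstOrder.Language.ElementaryEmbedding L F G iF iG) ∧
            Nonempty (@FirstOrder.Language.Hom L B G iB iG)) ∧
    (IsSC Q F ↔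
      ∀ (P : Type u) (iP : L.Structure P), @IsQFinPresented L Q P iP → Nontrivial P →
        Nonempty (@FirstOrder.Language.Hom L P F iP iF)) := by
  have : Nonempty F := ⟨g 0⟩
  have hom_of_ext : ∀ (P : Type u) [L.Structure P], IsQFinPresented Q P →
      (∃ (G : Type u) (_ : L.Structure G), Nonempty (F ↪ₑ[L] G) ∧ Nonempty (P →[L] G)) →
      Nonempty (P →[L] F) :=
    fun _ _ hP ⟨_, _, ⟨e⟩, ⟨φ⟩⟩ => nonempty_hom_of_isQFinPresented hF.1 e hP φ
  have hom_to_sc := isSC_of_forall_nonempty_hom hQ hASC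
  refine ⟨⟨fun hSC B iB hB _ => hSC.exists_elementaryEmbedding_hom hB,
    fun h => hom_to_sc fun P iP hP _ => hom_of_ext P hP (h P iP hP.1 ‹_›)⟩,
    fun hSC P iP hP _ => hom_of_ext P hP (hSC.exists_elementaryEmbedding_hom hP.1), hom_to_sc⟩
end

section
/- If Q is an almost structurally complete quasivariety and some elementary extension of the free algebra F of denumerable rank for Q contains an idempotent element (a one-element subalgebra), then Q is structurally complete. -/
open FirstOrder Language

universe u

variable {L : FirstOrder.Language.{u, u}}

/-!
The premise of a quasi-identity is a conjunction of equations, so under an idempotent element `e`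
it is satisfied by the constant assignment `e`. Satisfiability of the premise is expressed by an
existential sentence, which transfers from the elementary extension back to `F`. Hence no
quasi-identity is passive, and almost structural completeness is structural completeness.
-/

theorem FirstOrder.Language.Term.realize_const_of_isIdemElem {M : Type u} [L.Structure M] {e : M}
    (he : IsIdemElem (L := L) M e) {β : Type*} (t : L.Term β) :
    t.realize (fun _ => e) = e := by
  induction t with
  | var => rfl
  | func f ts ih =>
    simp only [Term.realize, ih]
    exact he _ f

namespace QuasiId

noncomputable def premiseSentence (q : QuasiId L) : L.Sentence :=
  (BoundedFormula.iInf fun i : Fin q.n =>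
    Term.bdEqual ((q.lhs i).relabel Sum.inr) ((q.rhs i).relabel Sum.inr)).exs

theorem realize_premiseSentence (q : QuasiId L) (M : Type u) [L.Structure M] :
    M ⊨ q.premiseSentence ↔ q.PremiseSat M := by
  simp [premiseSentence, Sentence.Realize, BoundedFormula.realize_iInf, PremiseSat]

theorem premiseSat_iff_of_elementaryEmbedding (q : QuasiId L) {M N : Type u}
    [L.Structure M] [L.Structure N] (f : L.ElementaryEmbedding M N) :
    q.PremiseSat M ↔ q.PremiseSat N := by
  rw [← realize_premiseSentence, ← realize_premiseSentence, f.map_sentence]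

theorem premiseSat_of_isIdemElem (q : QuasiId L) {M : Type u} [L.Structure M] {e : M}
    (he : IsIdemElem (L := L) M e) : q.PremiseSat M :=
  ⟨fun _ => e, fun i => by
    rw [(q.lhs i).realize_const_of_isIdemElem he, (q.rhs i).realize_const_of_isIdemElem he]⟩

theorem premiseSat_of_hasIdemElemExtension (q : QuasiId L) {F : Type u} [L.Structure F]
    (h : HasIdemElemExtension (L := L) F) : q.PremiseSat F := by
  obtain ⟨G, iG, ⟨f⟩, e, he⟩ := h
  exact (q.premiseSat_iff_of_elementaryEmbedding f).2 (q.premiseSat_of_isIdemElem he)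

end QuasiId

theorem IsASC.isSC {Q : ∀ M : Type u, L.Structure M → Prop} {F : Type u} [L.Structure F]
    (hASC : IsASC Q F) (hactive : ∀ q : QuasiId L, q.PremiseSat F) : IsSC Q F :=
  fun q hq => hASC q hq (hactive q)

theorem stmt_2_general {L : FirstOrder.Language.{u, u}}
    (Q : ∀ M : Type u, L.Structure M → Prop)
    (F : Type u) [iF : L.Structure F]
    (hASC : IsASC Q F) (hidem : HasIdemElemExtension (L := L) F) :
    IsSC Q F :=
  hASC.isSC fun q => q.premiseSat_of_hasIdemElemExtension hidem

theorem stmt_2 {L : FirstOrder.Language.{u, u}} [L.IsAlgebraic]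
    (Q : ∀ M : Type u, L.Structure M → Prop) (hQ : IsQuasivariety Q)
    (F : Type u) [iF : L.Structure F] (g : ℕ → F) (hF : IsFreeAlgOn Q F g)
    (hASC : IsASC Q F) (hidem : HasIdemElemExtension (L := L) F) :
    IsSC Q F :=
  stmt_2_general Q F (iF := iF) hASC hidem
end

section
/- Let Q be a structurally complete quasivariety such that no elementary extension of the free algebra F of denumerable rank for Q has an idempotent element. Then for every Q-simple algebra S and every nontrivial algebra A in Q, S embeds into some elementary extension of A. -/
open FirstOrder Language

universe u

variable {L : FirstOrder.Language.{u, u}}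

/-!
By compactness, realized by an ultrapower of `A` indexed by finite sets, it suffices to map each
finite part of the operation table of `S` into `A` compatibly with the operations while keeping
finitely many pairs of distinct elements apart. Structural completeness makes every finite part of
the table satisfiable in `F` (a quasi-identity with these premises and a conclusion false in `S`
fails in `F`), hence in `A` via a homomorphism `F → A`. By `Q`-simplicity, finitely many entries force,
in every member of `Q`, that identifying two distinct elements identifies a fixed pair `w ≠ w'`,
and that this in turn makes the image of `w` idempotent for any given finitely many operations.
Finally, some finite set of operations has no common idempotent in `A`: otherwise structural
completeness transfers such idempotents to `F`, and an ultrapower of `F` has an idempotent element.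
-/

open Filter Structure Term

theorem Filter.Product.coe_eq_coe {ι : Type*} {l : Filter ι} {M : ι → Type*}
    {x y : ∀ i, M i} :
    (x : l.Product M) = (y : l.Product M) ↔ ∀ᶠ i in l, x i = y i :=
  Quotient.eq''

noncomputable def finsetUltrafilter (X : Type*) : Ultrafilter (Finset X) :=
  Ultrafilter.of atTop

theorem eventually_mem_finsetUltrafilter {X : Type*} (x : X) :
    ∀ᶠ D in (finsetUltrafilter X : Filter (Finset X)), x ∈ D :=
  (eventually_ge_atTop {x}).filter_mono (Ultrafilter.of_le _) |>.mono
    fun _ h => h (Finset.mem_singleton_self x)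

noncomputable def ultrapowerDiagonal {ι : Type*} (U : Ultrafilter ι) (A : Type u)
    [L.Structure A] [Nonempty A] : A ↪ₑ[L] (U : Filter ι).Product fun _ => A where
  toFun a := ((fun _ => a : ι → A) : (U : Filter ι).Product fun _ => A)
  map_formula' {n} φ x := by
    have : (fun a => ((fun _ => a : ι → A) : (U : Filter ι).Product fun _ => A)) ∘ x =
        fun j => ((fun _ => x j : ι → A) : (U : Filter ι).Product fun _ => A) := rfl
    erw [this, Ultraproduct.realize_formula_cast]
    simp

theorem QuasiId.holds_ultraproduct {ι : Type u} (U : Ultrafilter ι) {M : ι → Type u}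
    [∀ i, L.Structure (M i)] (q : QuasiId L) (h : ∀ i, q.Holds (M i)) :
    q.Holds ((U : Filter ι).Product M) := by
  intro x hx
  obtain ⟨x', rfl⟩ :
      ∃ x' : Fin q.k → ∀ i, M i, (fun j => (x' j : (U : Filter ι).Product M)) = x :=
    ⟨fun j => (x j).out, funext fun j => Quotient.out_eq' (x j)⟩
  have hx' : ∀ j, ∀ᶠ i in (U : Filter ι),
      (q.lhs j).realize (fun k => x' k i) = (q.rhs j).realize (fun k => x' k i) := fun j => by
    have := hx j
    erw [Ultraproduct.term_realize_cast, Ultraproduct.term_realize_cast] at this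
    exact Filter.Product.coe_eq_coe.1 this
  erw [Ultraproduct.term_realize_cast, Ultraproduct.term_realize_cast]
  exact Filter.Product.coe_eq_coe.2 <|
    (eventually_all.2 hx').mono fun i hi => h i (fun k => x' k i) hi

theorem IsQuasivariety.ultraproduct {Q : ∀ M : Type u, L.Structure M → Prop}
    (hQ : IsQuasivariety Q) {ι : Type u} (U : Ultrafilter ι) {M : ι → Type u}
    [iM : ∀ i, L.Structure (M i)] (hM : ∀ i, Q (M i) (iM i)) :
    Q ((U : Filter ι).Product M) inferInstance := by
  obtain ⟨Ax, hAx⟩ := hQ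
  exact (hAx _ _).2 fun q hq => q.holds_ultraproduct U fun i => (hAx _ _).1 (hM i) q hq

/-- An entry `f(s₁, …, sₙ) = s` of the operation table of `S`, recorded as `(f, s̄)`. -/
abbrev DiagramFact (L : FirstOrder.Language.{u, u}) (S : Type*) :=
  Σ n, L.Functions n × (Fin n → S)

namespace DiagramFact

variable {S B C : Type*} [L.Structure S] [L.Structure B] [L.Structure C]

def SatisfiedBy (φ : DiagramFact L S) (x : S → B) : Prop :=
  funMap φ.2.1 (x ∘ φ.2.2) = x (funMap φ.2.1 φ.2.2)

def support (φ : DiagramFact L S) : Set S :=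
  insert (funMap φ.2.1 φ.2.2) (Set.range φ.2.2)

theorem support_finite (φ : DiagramFact L S) : φ.support.Finite :=
  (Set.finite_range _).insert _

theorem SatisfiedBy.comp_hom {φ : DiagramFact L S} {x : S → B} (hx : φ.SatisfiedBy x)
    (h : B →[L] C) : φ.SatisfiedBy (h ∘ x) := by
  rw [SatisfiedBy, Function.comp_apply, ← hx, HomClass.map_fun]
  rfl

theorem satisfiedBy_ultraproduct {ι : Type*} {U : Ultrafilter ι} {M : ι → Type*}
    [∀ i, L.Structure (M i)] {x : ∀ i, S → M i} {φ : DiagramFact L S}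
    (h : ∀ᶠ i in (U : Filter ι), φ.SatisfiedBy (x i)) :
    φ.SatisfiedBy fun s => ((fun i => x i s : ∀ i, M i) : (U : Filter ι).Product M) := by
  erw [SatisfiedBy, Ultraproduct.funMap_cast]
  exact Filter.Product.coe_eq_coe.2 h

end DiagramFact

def ultraproductHom [L.IsAlgebraic] {S : Type*} [L.Structure S] {ι : Type*} (U : Ultrafilter ι)
    {M : ι → Type*} [∀ i, L.Structure (M i)] (x : ∀ i, S → M i)
    (hx : ∀ φ : DiagramFact L S, ∀ᶠ i in (U : Filter ι), φ.SatisfiedBy (x i)) :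
    S →[L] (U : Filter ι).Product M where
  toFun s := ((fun i => x i s : ∀ i, M i) : (U : Filter ι).Product M)
  map_fun' f s := (DiagramFact.satisfiedBy_ultraproduct (hx ⟨_, f, s⟩)).symm
  map_rel' r := isEmptyElim r

section StructuralCompleteness

variable {Q : ∀ M : Type u, L.Structure M → Prop} {F : Type u} [L.Structure F]

theorem IsSC.exists_solution_s3 (hSC : IsSC Q F) {ι α : Type*} [Finite ι] [Finite α]
    (lhs rhs : ι → L.Term α) {M : Type u} [iM : L.Structure M] (hM : Q M iM) [Nontrivial M]
    {x : α → M} (hx : ∀ i, (lhs i).realize x = (rhs i).realize x) :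
    ∃ y : α → F, ∀ i, (lhs i).realize y = (rhs i).realize y := by
  obtain ⟨a, a', haa'⟩ := exists_pair_ne M
  let eι := Finite.equivFin ι
  let e := Finite.equivFin (α ⊕ Fin 2)
  -- concluding that two fresh variables are equal, `q` fails in `M`, hence in `F`
  let q : QuasiId L :=
    ⟨_, _, fun i => (lhs (eι.symm i)).relabel (e ∘ Sum.inl),
      fun i => (rhs (eι.symm i)).relabel (e ∘ Sum.inl),
      var (e (Sum.inr 0)), var (e (Sum.inr 1))⟩
  have hqM : ¬ q.Holds M := fun hq => haa' <| by
    simpa [q] using hq (Sum.elim x ![a, a'] ∘ e.symm) fun i => by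
      simpa [q, Term.realize_relabel, Function.comp_def] using hx _
  have hqF : ¬ q.Holds F := fun hq => hqM (hSC q hq M iM hM)
  simp only [QuasiId.Holds, not_forall] at hqF
  obtain ⟨z, hz, -⟩ := hqF
  refine ⟨z ∘ e ∘ Sum.inl, fun i => ?_⟩
  simpa [q, Term.realize_relabel] using hz (eι i)

theorem IsSC.exists_satisfiedBy (hSC : IsSC Q F) {S : Type u} [iS : L.Structure S]
    (hS : Q S iS) [Nontrivial S] (D : Finset (DiagramFact L S)) :
    ∃ y : S → F, ∀ φ ∈ D, φ.SatisfiedBy y := by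
  obtain ⟨s₀⟩ := (inferInstance : Nonempty S)
  let R : Set S := insert s₀ (⋃ φ ∈ D, φ.support)
  have : Finite R :=
    ((D.finite_toSet.biUnion fun φ _ => φ.support_finite).insert s₀).to_subtype
  have : Nonempty R := ⟨⟨s₀, Set.mem_insert _ _⟩⟩
  let r : S → R := Function.invFun (↑)
  have hr : ∀ φ ∈ D, ∀ s ∈ φ.support, (r s : S) = s := fun φ hφ s hs =>
    Function.invFun_eq ⟨⟨s, Set.mem_insert_of_mem _ (Set.mem_biUnion hφ hs)⟩, rfl⟩
  obtain ⟨y, hy⟩ := hSC.exists_solution_s3 (ι := D)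
    (fun φ => func φ.1.2.1 fun j => var (r (φ.1.2.2 j)))
    (fun φ => var (r (funMap φ.1.2.1 φ.1.2.2)))
    hS (x := (↑)) fun ⟨φ, hφ⟩ => by
      have hval : (fun j => (r (φ.2.2 j) : S)) = φ.2.2 :=
        funext fun j => hr φ hφ _ (Set.mem_insert_of_mem _ (Set.mem_range_self j))
      simp only [Term.realize, hval, hr φ hφ _ (Set.mem_insert _ _)]
  exact ⟨y ∘ r, fun φ hφ => hy ⟨φ, hφ⟩⟩

end StructuralCompleteness

def IsIdemFor {M : Type*} [L.Structure M] (P : Finset (Σ n, L.Functions n)) (e : M) : Prop :=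
  ∀ f ∈ P, funMap f.2 (fun _ => e) = e

theorem isIdemElem_ultrapower {M : Type u} [L.Structure M] {ι : Type u} {U : Ultrafilter ι}
    {c : ι → M} (hc : ∀ f : Σ n, L.Functions n, ∀ᶠ i in (U : Filter ι),
      funMap f.2 (fun _ => c i) = c i) :
    IsIdemElem (L := L) ((U : Filter ι).Product fun _ => M)
      (c : (U : Filter ι).Product fun _ => M) := by
  intro m f
  erw [Ultraproduct.funMap_cast]
  exact Filter.Product.coe_eq_coe.2 (hc ⟨m, f⟩)

theorem exists_finset_forall_not_isIdemFor {Q : ∀ M : Type u, L.Structure M → Prop}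
    {F : Type u} [iF : L.Structure F] [Nonempty F] (hSC : IsSC Q F)
    (hno : ∀ (G : Type u) (iG : L.Structure G),
      Nonempty (@FirstOrder.Language.ElementaryEmbedding L F G iF iG) →
        ∀ e : G, ¬ @IsIdemElem L G iG e)
    {A : Type u} [iA : L.Structure A] (hA : Q A iA) [Nontrivial A] :
    ∃ P : Finset (Σ n, L.Functions n), ∀ e : A, ¬ IsIdemFor P e := by
  by_contra! h
  have hF : ∀ P, ∃ c : F, IsIdemFor P c := fun P => by
    obtain ⟨e, he⟩ := h P
    obtain ⟨y, hy⟩ := hSC.exists_solution_s3 (ι := P) (α := Unit)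
      (fun f => func f.1.2 fun _ => var ()) (fun _ => var ()) hA (x := fun _ => e)
      fun f => he f.1 f.2
    exact ⟨y (), fun f hf => hy ⟨f, hf⟩⟩
  choose c hc using hF
  exact hno _ _ ⟨ultrapowerDiagonal (finsetUltrafilter _) F⟩ _ <| isIdemElem_ultrapower fun f =>
    (eventually_mem_finsetUltrafilter f).mono fun P hP => hc P f hP

theorem IsQSimple.exists_finset_collapse [L.IsAlgebraic]
    {Q : ∀ M : Type u, L.Structure M → Prop} (hQ : IsQuasivariety Q)
    {S : Type u} [iS : L.Structure S] (hS : IsQSimple Q S) {a b : S} (hab : a ≠ b) (c d : S) :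
    ∃ D : Finset (DiagramFact L S), ∀ (B : Type u) (iB : L.Structure B), Q B iB →
      ∀ x : S → B, (∀ φ ∈ D, φ.SatisfiedBy x) → x a = x b → x c = x d := by
  by_contra! h
  choose B iB hB x hxD hxab hxcd using h
  let U := finsetUltrafilter (DiagramFact L S)
  let ψ := ultraproductHom U x fun φ =>
    (eventually_mem_finsetUltrafilter φ).mono fun D hD => hxD D φ hD
  have hker : IsQCong Q S fun s t => ψ s = ψ t :=
    ⟨_, _, hQ.ultraproduct U hB, ψ, fun _ _ => Iff.rfl⟩
  rcases hS.2.2 _ hker with hid | htot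
  · exact hab ((hid a b).1 (Filter.Product.coe_eq_coe.2 (Eventually.of_forall hxab)))
  · obtain ⟨D, hD⟩ := (Filter.Product.coe_eq_coe.1 (htot c d)).exists
    exact hxcd D hD

theorem exists_satisfiedBy_separating [L.IsAlgebraic]
    {Q : ∀ M : Type u, L.Structure M → Prop} (hQ : IsQuasivariety Q)
    {F : Type u} [L.Structure F] (hSC : IsSC Q F)
    {S : Type u} [L.Structure S] (hS : IsQSimple Q S)
    {A : Type u} [iA : L.Structure A] (hA : Q A iA) (h : F →[L] A)
    (Pf : Finset (Σ n, L.Functions n)) (hPf : ∀ e : A, ¬ IsIdemFor Pf e)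
    (D : Finset (DiagramFact L S)) (P : Finset (S × S)) (hP : ∀ p ∈ P, p.1 ≠ p.2) :
    ∃ x : S → A, (∀ φ ∈ D, φ.SatisfiedBy x) ∧ ∀ p ∈ P, x p.1 ≠ x p.2 := by
  classical
  have := hS.1
  obtain ⟨w, w', hw⟩ := exists_pair_ne S
  choose! C hC using fun (a b c d : S) (hab : a ≠ b) => hS.exists_finset_collapse hQ hab c d
  let wf : (Σ n, L.Functions n) → DiagramFact L S := fun f => ⟨f.1, f.2, fun _ => w⟩
  let DP := P.biUnion fun p => C p.1 p.2 w w'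
  let DF := Pf.biUnion fun f => C w w' w (funMap f.2 fun _ => w)
  obtain ⟨y, hy⟩ := hSC.exists_satisfiedBy hS.2.1 (D ∪ DP ∪ DF ∪ Pf.image wf)
  let x := h ∘ y
  have hx : ∀ φ ∈ D ∪ DP ∪ DF ∪ Pf.image wf, φ.SatisfiedBy x := fun φ hφ =>
    (hy φ hφ).comp_hom h
  have hxw : x w ≠ x w' := fun hxw => hPf (x w) fun f hf => by
    have hfix : x w = x (funMap f.2 fun _ => w) :=
      hC w w' w _ hw A iA hA x (fun φ hφ => hx φ <| Finset.mem_union_left _ <|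
        Finset.mem_union_right _ <| Finset.mem_biUnion.2 ⟨f, hf, hφ⟩) hxw
    exact (hx (wf f) (Finset.mem_union_right _ (Finset.mem_image_of_mem _ hf))).trans hfix.symm
  refine ⟨x, fun φ hφ => hx φ (by simp [hφ]), fun p hp hxp => hxw ?_⟩
  refine hC p.1 p.2 w w' (hP p hp) A iA hA x (fun φ hφ => hx φ ?_) hxp
  exact Finset.mem_union_left _ <| Finset.mem_union_left _ <| Finset.mem_union_right _ <|
    Finset.mem_biUnion.2 ⟨p, hp, hφ⟩

theorem exists_embedding_ultrapower [L.IsAlgebraic] {S A : Type u} [L.Structure S] [L.Structure A]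
    (h : ∀ (D : Finset (DiagramFact L S)) (P : Finset (S × S)), (∀ p ∈ P, p.1 ≠ p.2) →
      ∃ x : S → A, (∀ φ ∈ D, φ.SatisfiedBy x) ∧ ∀ p ∈ P, x p.1 ≠ x p.2) :
    ∃ (ι : Type u) (U : Ultrafilter ι),
      Nonempty (S ↪[L] (U : Filter ι).Product fun _ => A) := by
  classical
  choose x hxD hxP using fun E : Finset (DiagramFact L S ⊕ S × S) =>
    h E.toLeft (E.toRight.filter fun p => p.1 ≠ p.2) fun p hp => (Finset.mem_filter.1 hp).2
  let U := finsetUltrafilter (DiagramFact L S ⊕ S × S)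
  let ψ := ultraproductHom U x fun φ =>
    (eventually_mem_finsetUltrafilter (.inl φ)).mono fun E hE => hxD E φ (Finset.mem_toLeft.2 hE)
  refine ⟨_, U, ⟨Embedding.ofInjective (f := ψ) fun s t hst => by_contra fun hne => ?_⟩⟩
  obtain ⟨E, hE, hmem⟩ :=
    ((Filter.Product.coe_eq_coe.1 hst).and
      (eventually_mem_finsetUltrafilter (.inr (s, t)))).exists
  exact hxP E (s, t) (Finset.mem_filter.2 ⟨Finset.mem_toRight.2 hmem, hne⟩) hE

theorem IsFreeAlgOn.nonempty_hom {Q : ∀ M : Type u, L.Structure M → Prop} {F : Type u}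
    [L.Structure F] {g : ℕ → F} (hF : IsFreeAlgOn Q F g) {A : Type u} [iA : L.Structure A]
    (hA : Q A iA) [Nonempty A] : Nonempty (F →[L] A) :=
  ⟨(hF.2.2 A iA hA fun _ => Classical.arbitrary A).exists.choose⟩

theorem stmt_3 {L : FirstOrder.Language.{u, u}} [L.IsAlgebraic]
    (Q : ∀ M : Type u, L.Structure M → Prop) (hQ : IsQuasivariety Q)
    (F : Type u) [iF : L.Structure F] (g : ℕ → F) (hF : IsFreeAlgOn Q F g)
    (hSC : IsSC Q F)
    (hno : ∀ (G : Type u) (iG : L.Structure G),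
      Nonempty (@FirstOrder.Language.ElementaryEmbedding L F G iF iG) →
        ∀ e : G, ¬ @IsIdemElem L G iG e)
    (S : Type u) [iS : L.Structure S] (hS : IsQSimple Q S)
    (A : Type u) [iA : L.Structure A] (hQA : Q A iA) (hA : Nontrivial A) :
    ∃ (B : Type u) (iB : L.Structure B),
      Nonempty (@FirstOrder.Language.ElementaryEmbedding L A B iA iB) ∧
        Nonempty (@FirstOrder.Language.Embedding L S B iS iB) := by
  have : Nonempty F := ⟨g 0⟩
  obtain ⟨h⟩ := hF.nonempty_hom hQA
  obtain ⟨Pf, hPf⟩ := exists_finset_forall_not_isIdemFor hSC hno hQA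
  obtain ⟨ι, U, ⟨e⟩⟩ := exists_embedding_ultrapower fun D P hP =>
    exists_satisfiedBy_separating hQ hSC hS hQA h Pf hPf D P hP
  exact ⟨_, _, ⟨ultrapowerDiagonal U A⟩, ⟨e⟩⟩
end

section
/- If V is a minimal discriminator variety, then V is minimal as a quasivariety. -/
open FirstOrder Language

universe u

variable {L : FirstOrder.Language.{u, u}}

/-!
Let `t` be the discriminator term. Every identity that holds in all algebras on which `t` is the
discriminator holds in `V`; in particular `switchOp t a b c e`, which is "if `a = b` then `c`
else `e`" in such algebras, patches two valuations together according to whether `a = b`, and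
the premises of a quasi-identity collapse to a single equation `l ≐ r`. By minimality,
an identity that holds in one nontrivial member of `V` holds in all of `V`.

Let `A` be a nontrivial member of a subquasivariety and `l ≐ r → u ≐ w` true in `A`. If `l ≐ r`
is satisfiable in `A`, gluing valuations shows that `A` satisfies `t(l, r, u) ≐ t(l, r, w)`, an
identity that gives back the quasi-identity wherever `l ≐ r` holds. Otherwise, the quotient of
`A` by a congruence maximal among those separating every pair `(l x, r x)` is nontrivial and
satisfies `t(l, r, z) ≐ l`; throughout `V` this identity forces every algebra in which `l ≐ r` is
satisfiable to be trivial.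
-/

section Discriminator

variable (t : L.Term (Fin 3))

def discrOp {M : Type u} [L.Structure M] (a b c : M) : M :=
  t.realize ![a, b, c]

def switchOp {M : Type u} [L.Structure M] (a b c e : M) : M :=
  discrOp t (discrOp t a b c) (discrOp t a b e) e

def discrTerm {γ : Type*} (a b c : L.Term γ) : L.Term γ :=
  t.subst ![a, b, c]

def switchTerm {γ : Type*} (a b c e : L.Term γ) : L.Term γ :=
  discrTerm t (discrTerm t a b c) (discrTerm t a b e) e

variable {t}

@[simp] theorem realize_discrTerm {γ : Type*} {M : Type u} [L.Structure M]
    (a b c : L.Term γ) (v : γ → M) :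
    (discrTerm t a b c).realize v = discrOp t (a.realize v) (b.realize v) (c.realize v) := by
  simp only [discrTerm, discrOp, Term.realize_subst]
  congr 1
  funext i
  fin_cases i <;> rfl

@[simp] theorem realize_switchTerm {γ : Type*} {M : Type u} [L.Structure M]
    (a b c e : L.Term γ) (v : γ → M) :
    (switchTerm t a b c e).realize v
      = switchOp t (a.realize v) (b.realize v) (c.realize v) (e.realize v) := by
  simp [switchTerm, switchOp]

open scoped Classical in
theorem IsDiscrTermOn.discrOp_eq {M : Type u} [L.Structure M] (h : IsDiscrTermOn t M)
    (a b c : M) : discrOp t a b c = if a = b then c else a := by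
  split_ifs with hab
  exacts [(h a b c).2 hab, (h a b c).1 hab]

open scoped Classical in
theorem IsDiscrTermOn.switchOp_eq {M : Type u} [L.Structure M] (h : IsDiscrTermOn t M)
    (a b c e : M) : switchOp t a b c e = if a = b then c else e := by
  by_cases hab : a = b
  · by_cases hce : c = e <;> simp [switchOp, h.discrOp_eq, hab, hce]
  · simp [switchOp, h.discrOp_eq, hab]

end Discriminator

def SatisfiesDiscrIdentities (t : L.Term (Fin 3)) (M : Type u) [L.Structure M] : Prop :=
  ∀ e : EqId L,
    (∀ (E : Type u) (iE : L.Structure E), @IsDiscrTermOn L t E iE → @EqId.Holds L e E iE) →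
      e.Holds M

namespace SatisfiesDiscrIdentities

open Term

variable {t : L.Term (Fin 3)} {M : Type u} [L.Structure M] (hM : SatisfiesDiscrIdentities t M)
include hM

theorem realize_eq {β : Type*} [Finite β] {l r : L.Term β}
    (h : ∀ (E : Type u) [L.Structure E], IsDiscrTermOn t E →
      ∀ v : β → E, l.realize v = r.realize v) (v : β → M) :
    l.realize v = r.realize v := by
  obtain ⟨n, ⟨e⟩⟩ := Finite.exists_equiv_fin β
  have := hM ⟨n, l.relabel e, r.relabel e⟩
    (fun E _ hE w => by simpa [realize_relabel] using h E hE (w ∘ e)) (v ∘ e.symm)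
  simpa [realize_relabel, Function.comp_assoc] using this

theorem discrOp_self (a c : M) : discrOp t a a c = c := by
  simpa using hM.realize_eq (l := discrTerm t (var 0) (var 0) (var 1)) (r := var (1 : Fin 2))
    (fun E _ hE v => by simp [hE.discrOp_eq]) ![a, c]

theorem switchOp_self (a b : M) : switchOp t a b a a = a := by
  simpa using hM.realize_eq (l := switchTerm t (var 0) (var 1) (var 0) (var 0))
    (r := var (0 : Fin 2)) (fun E _ hE v => by simp [hE.switchOp_eq]) ![a, b]

theorem switchOp_left_eq_right (a b e : M) : switchOp t a b a e = switchOp t a b b e := by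
  simpa using hM.realize_eq (l := switchTerm t (var 0) (var 1) (var 0) (var (2 : Fin 3)))
    (r := switchTerm t (var 0) (var 1) (var 1) (var 2))
    (fun E _ hE v => by by_cases h : v 0 = v 1 <;> simp [hE.switchOp_eq, h]) ![a, b, e]

theorem switchOp_switchOp_eq_discrOp (a b c e : M) :
    switchOp t a b (switchOp t a b c e) a = discrOp t a b c := by
  simpa using hM.realize_eq
    (l := switchTerm t (var 0) (var 1) (switchTerm t (var 0) (var 1) (var 2) (var 3)) (var 0))
    (r := discrTerm t (var 0) (var 1) (var (2 : Fin 4)))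
    (fun E _ hE v => by
      by_cases h : v 0 = v 1 <;> simp [hE.switchOp_eq, hE.discrOp_eq, h]) ![a, b, c, e]

theorem switchOp_discrOp (a b c : M) : switchOp t a b a (discrOp t a b c) = a := by
  simpa using hM.realize_eq
    (l := switchTerm t (var 0) (var 1) (var 0) (discrTerm t (var 0) (var 1) (var (2 : Fin 3))))
    (r := var 0)
    (fun E _ hE v => by
      by_cases h : v 0 = v 1 <;> simp [hE.switchOp_eq, hE.discrOp_eq, h]) ![a, b, c]

theorem switchOp_discrOp_swap (a b c : M) : switchOp t a b a (discrOp t b a c) = b := by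
  simpa using hM.realize_eq
    (l := switchTerm t (var 0) (var 1) (var 0) (discrTerm t (var 1) (var 0) (var (2 : Fin 3))))
    (r := var 1)
    (fun E _ hE v => by
      by_cases h : v 0 = v 1
      · simp [hE.switchOp_eq, hE.discrOp_eq, h]
      · simp [hE.switchOp_eq, hE.discrOp_eq, h, Ne.symm h]) ![a, b, c]

theorem switchOp_switchOp_right (a b c e : M) :
    switchOp t a b a (switchOp t a b c e) = switchOp t a b a e := by
  simpa using hM.realize_eq
    (l := switchTerm t (var 0) (var 1) (var 0) (switchTerm t (var 0) (var 1) (var 2) (var 3)))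
    (r := switchTerm t (var 0) (var 1) (var 0) (var (3 : Fin 4)))
    (fun E _ hE v => by by_cases h : v 0 = v 1 <;> simp [hE.switchOp_eq, h]) ![a, b, c, e]

theorem realize_switchOp {γ : Type*} [Finite γ] (σ : L.Term γ) (a b : M) (x y : γ → M) :
    σ.realize (fun j => switchOp t a b (x j) (y j))
      = switchOp t a b (σ.realize x) (σ.realize y) := by
  have := hM.realize_eq
    (l := σ.subst fun j => switchTerm t (var (.inl 0)) (var (.inl 1))
      (var (.inr (.inl j))) (var (.inr (.inr j))))
    (r := switchTerm t (var (.inl 0)) (var (.inl 1))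
      (σ.relabel (.inr ∘ .inl)) (σ.relabel (β := Fin 2 ⊕ (γ ⊕ γ)) (.inr ∘ .inr)))
    (fun E _ hE v => by
      by_cases h : v (.inl 0) = v (.inl 1) <;>
        simp [hE.switchOp_eq, h, realize_subst, realize_relabel, Function.comp_def])
    (Sum.elim ![a, b] (Sum.elim x y))
  simpa [realize_subst, realize_relabel, Function.comp_def] using this

theorem switchOp_comm_of_eq {a b a' b' : M} (h : switchOp t a b a a' = switchOp t a b a b') :
    switchOp t a' b' a' a = switchOp t a' b' a' b := by
  -- both sides are `g w = "if a' = b' then a' else if w = a' then a else if w = b' then b else a"`,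
  -- at `w = switchOp t a b a a'` and at `w = switchOp t a b a b'` respectively
  let g (w : L.Term (Fin 4)) : L.Term (Fin 4) := switchTerm t (var 2) (var 3) (var 2)
    (switchTerm t w (var 2) (var 0) (switchTerm t w (var 3) (var 1) (var 0)))
  have key (i j : Fin 4) (hij : i = 0 ∧ j = 2 ∨ i = 1 ∧ j = 3) := hM.realize_eq
    (l := switchTerm t (var 2) (var 3) (var 2) (var i))
    (r := g (switchTerm t (var 0) (var 1) (var 0) (var j)))
    (fun E _ hE v => by
      rcases hij with ⟨rfl, rfl⟩ | ⟨rfl, rfl⟩ <;>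
        simp only [g, realize_switchTerm, realize_var, hE.switchOp_eq] <;> grind)
    ![a, b, a', b']
  have h₁ := key 0 2 (by decide)
  have h₂ := key 1 3 (by decide)
  simp [g] at h₁ h₂
  rw [h₁, h₂, h]

theorem switchOp_funMap {m : ℕ} (f : L.Functions m) (a b : M) (x : Fin m → M) :
    switchOp t a b a (Structure.funMap f x)
      = switchOp t a b a (Structure.funMap f fun i => switchOp t a b a (x i)) := by
  have := hM.realize_switchOp (func f var) a b (fun _ => a) x
  simp only [realize_func, realize_var] at this
  rw [this, hM.switchOp_switchOp_right]

theorem isCongruence_switchOp (a b : M) :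
    IsCongruence (L := L) M fun c e => switchOp t a b a c = switchOp t a b a e := by
  refine ⟨⟨fun _ => rfl, Eq.symm, Eq.trans⟩, fun m f x y h => ?_⟩
  change switchOp t a b a _ = switchOp t a b a _
  rw [hM.switchOp_funMap, hM.switchOp_funMap f a b y, funext h]

theorem discrOp_eq_discrOp_iff {a b c e : M} :
    discrOp t a b c = discrOp t b a e ↔ a = b ∧ c = e := by
  refine ⟨fun h => ?_, fun ⟨rfl, rfl⟩ => rfl⟩
  have hab : a = b := by
    rw [← hM.switchOp_discrOp a b c, h, hM.switchOp_discrOp_swap]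
  subst hab
  exact ⟨rfl, by simpa [hM.discrOp_self] using h⟩

theorem discrOp_eq_discrOp_of_imp {k : ℕ} {l r u w : L.Term (Fin k)}
    (hq : ∀ x : Fin k → M, l.realize x = r.realize x → u.realize x = w.realize x)
    {b : Fin k → M} (hb : l.realize b = r.realize b) (a : Fin k → M) :
    discrOp t (l.realize a) (r.realize a) (u.realize a)
      = discrOp t (l.realize a) (r.realize a) (w.realize a) := by
  -- `c` is `a` where `l a = r a` and `b` elsewhere, so it satisfies the premise
  let c j := switchOp t (l.realize a) (r.realize a) (a j) (b j)
  have hc : l.realize c = r.realize c := by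
    rw [hM.realize_switchOp, hM.realize_switchOp, hb]
    exact hM.switchOp_left_eq_right _ _ _
  rw [← hM.switchOp_switchOp_eq_discrOp _ _ (u.realize a) (u.realize b),
    ← hM.switchOp_switchOp_eq_discrOp _ _ (w.realize a) (w.realize b),
    ← hM.realize_switchOp, ← hM.realize_switchOp, hq c hc]

end SatisfiesDiscrIdentities

def discrConj (t : L.Term (Fin 3)) {γ : Type*} (eqs : List (L.Term γ × L.Term γ))
    (e : L.Term γ × L.Term γ) : L.Term γ × L.Term γ :=
  eqs.foldr (fun p q => (discrTerm t p.1 p.2 q.1, discrTerm t p.2 p.1 q.2)) e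

theorem SatisfiesDiscrIdentities.realize_discrConj_iff {t : L.Term (Fin 3)} {M : Type u}
    [L.Structure M] (hM : SatisfiesDiscrIdentities t M) {γ : Type*}
    (eqs : List (L.Term γ × L.Term γ)) (e : L.Term γ × L.Term γ) (v : γ → M) :
    (discrConj t eqs e).1.realize v = (discrConj t eqs e).2.realize v ↔
      (∀ p ∈ eqs, p.1.realize v = p.2.realize v) ∧ e.1.realize v = e.2.realize v := by
  induction eqs with
  | nil => simp [discrConj]
  | cons p eqs ih =>
    simp only [discrConj, List.foldr_cons, realize_discrTerm] at ih ⊢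
    rw [hM.discrOp_eq_discrOp_iff, ih, List.forall_mem_cons, and_assoc]

def QuasiId.discrPremise (t : L.Term (Fin 3)) (q : QuasiId L) :
    L.Term (Fin q.k) × L.Term (Fin q.k) :=
  discrConj t (List.ofFn fun i => (q.lhs i, q.rhs i)) (q.cl, q.cl)

theorem SatisfiesDiscrIdentities.realize_discrPremise_iff {t : L.Term (Fin 3)} {M : Type u}
    [L.Structure M] (hM : SatisfiesDiscrIdentities t M) (q : QuasiId L) (x : Fin q.k → M) :
    (q.discrPremise t).1.realize x = (q.discrPremise t).2.realize x ↔
      ∀ i, (q.lhs i).realize x = (q.rhs i).realize x := by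
  simp [QuasiId.discrPremise, hM.realize_discrConj_iff]

section Congruence

variable {M N : Type u} [L.Structure M] [L.Structure N]

variable (M) in
theorem isCongruence_eq : IsCongruence (L := L) M Eq :=
  ⟨eq_equivalence, fun _ _ _ _ h => congrArg _ (funext h)⟩

theorem IsCongruence.comap {θ : N → N → Prop} (hθ : IsCongruence (L := L) N θ) (g : M →[L] N) :
    IsCongruence (L := L) M fun a b => θ (g a) (g b) := by
  refine ⟨⟨fun a => hθ.1.refl _, hθ.1.symm, hθ.1.trans⟩, fun m f x y h => ?_⟩
  simpa only [Hom.map_fun] using hθ.2 m f (g ∘ x) (g ∘ y) h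

theorem isCongruence_sSup_of_isChain {c : Set (M → M → Prop)}
    (hc : ∀ θ ∈ c, IsCongruence (L := L) M θ) (hchain : IsChain (· ≤ ·) c) (hne : c.Nonempty) :
    IsCongruence (L := L) M (sSup c) := by
  have hsSup : sSup c = fun a b => ∃ θ ∈ c, θ a b := by
    ext
    simp
  rw [hsSup]
  obtain ⟨θ₀, hθ₀⟩ := hne
  refine ⟨⟨fun a => ⟨θ₀, hθ₀, (hc θ₀ hθ₀).1.refl a⟩,
    fun ⟨θ, hθ, h⟩ => ⟨θ, hθ, (hc θ hθ).1.symm h⟩, ?_⟩, fun m f x y h => ?_⟩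
  · rintro a b d ⟨θ, hθ, hab⟩ ⟨θ', hθ', hbd⟩
    rcases hchain.total hθ hθ' with hle | hle
    · exact ⟨θ', hθ', (hc θ' hθ').1.trans (hle _ _ hab) hbd⟩
    · exact ⟨θ, hθ, (hc θ hθ).1.trans hab (hle _ _ hbd)⟩
  · classical
    choose θ hθ hxy using h
    have : Nonempty c := ⟨⟨θ₀, hθ₀⟩⟩
    obtain ⟨⟨θ', hθ'⟩, hle⟩ := hchain.directedOn.directed_val.finset_le
      (Finset.univ.image fun i => (⟨θ i, hθ i⟩ : c))
    refine ⟨θ', hθ', (hc θ' hθ').2 m f x y fun i => ?_⟩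
    exact hle _ (Finset.mem_image_of_mem _ (Finset.mem_univ i)) _ _ (hxy i)

def IsCongruenceAvoiding (M : Type u) [L.Structure M] {ι : Type*} (a b : ι → M)
    (θ : M → M → Prop) : Prop :=
  IsCongruence (L := L) M θ ∧ ∀ i, ¬θ (a i) (b i)

theorem exists_maximal_isCongruenceAvoiding {ι : Type*} (a b : ι → M) (hab : ∀ i, a i ≠ b i) :
    ∃ μ, Maximal (IsCongruenceAvoiding (L := L) M a b) μ := by
  obtain ⟨μ, -, hμ⟩ := zorn_le_nonempty₀ {θ | IsCongruenceAvoiding (L := L) M a b θ}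
    (fun c hc hchain θ₀ hθ₀ =>
      ⟨sSup c, ⟨isCongruence_sSup_of_isChain (fun θ hθ => (hc hθ).1) hchain ⟨θ₀, hθ₀⟩,
          fun i h => by
            obtain ⟨θ, hθ, h⟩ : ∃ θ ∈ c, θ (a i) (b i) := by simpa using h
            exact (hc hθ).2 i h⟩,
        fun θ hθ => le_sSup hθ⟩)
    Eq ⟨isCongruence_eq M, hab⟩
  exact ⟨μ, hμ⟩

def IsCongruence.setoid {μ : M → M → Prop} (hμ : IsCongruence (L := L) M μ) : Setoid M :=
  ⟨μ, hμ.1⟩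

variable [L.IsAlgebraic] {μ : M → M → Prop} (hμ : IsCongruence (L := L) M μ)

instance IsCongruence.prestructure : L.Prestructure hμ.setoid where
  toStructure := inferInstance
  fun_equiv x y h := hμ.2 _ _ x y h
  rel_equiv := fun {_} r => isEmptyElim r

def IsCongruence.quotientMk : M →[L] Quotient hμ.setoid where
  toFun := Quotient.mk _
  map_fun' f x := (funMap_quotient_mk' hμ.setoid f x).symm
  map_rel' r := isEmptyElim r

theorem IsCongruence.quotientMk_surjective : Function.Surjective hμ.quotientMk :=
  Quotient.mk_surjective (s := hμ.setoid)

theorem IsCongruence.quotientMk_eq_iff {a b : M} : hμ.quotientMk a = hμ.quotientMk b ↔ μ a b :=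
  Quotient.eq (r := hμ.setoid)

end Congruence

theorem Maximal.isCongruenceAvoiding_quotient [L.IsAlgebraic] {M : Type u} [L.Structure M]
    {k : ℕ} {l r : L.Term (Fin k)} {μ : M → M → Prop}
    (hμ : Maximal (IsCongruenceAvoiding (L := L) M l.realize r.realize) μ) :
    Maximal (IsCongruenceAvoiding (L := L) (Quotient hμ.prop.1.setoid) l.realize r.realize) Eq := by
  have hsurj : Function.Surjective (hμ.prop.1.quotientMk ∘ · : (Fin k → M) → _) :=
    hμ.prop.1.quotientMk_surjective.comp_left
  refine ⟨⟨isCongruence_eq _, fun x hx => ?_⟩, fun θ hθ _ => ?_⟩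
  · obtain ⟨y, rfl⟩ := hsurj x
    simp only [HomClass.realize_term, hμ.prop.1.quotientMk_eq_iff] at hx
    exact hμ.prop.2 y hx
  · have hpull : IsCongruenceAvoiding (L := L) M l.realize r.realize
        fun a b => θ (hμ.prop.1.quotientMk a) (hμ.prop.1.quotientMk b) :=
      ⟨hθ.1.comap hμ.prop.1.quotientMk, fun y h =>
        hθ.2 (hμ.prop.1.quotientMk ∘ y) (by simpa only [HomClass.realize_term] using h)⟩
    have hle := hμ.2 hpull fun a b h => (hμ.prop.1.quotientMk_eq_iff.2 h) ▸ hθ.1.1.refl _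
    intro a b hab
    obtain ⟨a, rfl⟩ := hμ.prop.1.quotientMk_surjective a
    obtain ⟨b, rfl⟩ := hμ.prop.1.quotientMk_surjective b
    exact hμ.prop.1.quotientMk_eq_iff.2 (hle _ _ hab)

theorem SatisfiesDiscrIdentities.discrOp_eq_left_of_maximal {t : L.Term (Fin 3)} {B : Type u}
    [L.Structure B] (hB : SatisfiesDiscrIdentities t B) {k : ℕ} {l r : L.Term (Fin k)}
    (hmax : Maximal (IsCongruenceAvoiding (L := L) B l.realize r.realize) Eq)
    (x : Fin k → B) (z : B) : discrOp t (l.realize x) (r.realize x) z = l.realize x := by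
  by_contra hz
  -- the kernel of `switchOp t (l x) (r x) (l x)` identifies `discrOp t (l x) (r x) z` with `l x`,
  -- so by maximality it relates some `l y` and `r y`
  obtain ⟨y, hy⟩ : ∃ y, switchOp t (l.realize x) (r.realize x) (l.realize x) (l.realize y)
      = switchOp t (l.realize x) (r.realize x) (l.realize x) (r.realize y) := by
    by_contra! hne
    refine hz (hmax.2 ⟨hB.isCongruence_switchOp _ _, hne⟩ (fun a b h => h ▸ rfl) _ _ ?_)
    beta_reduce
    rw [hB.switchOp_discrOp, hB.switchOp_self]
  apply hmax.prop.2 fun j => switchOp t (l.realize y) (r.realize y) (y j) (x j)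
  beta_reduce
  rw [hB.realize_switchOp, hB.realize_switchOp,
    ← hB.switchOp_left_eq_right (l.realize y) (r.realize y) (r.realize x)]
  exact hB.switchOp_comm_of_eq hy

theorem IsVariety.and_holds {V : ∀ M : Type u, L.Structure M → Prop} (hV : IsVariety V)
    (e : EqId L) : IsVariety fun M iM => V M iM ∧ @EqId.Holds L e M iM := by
  obtain ⟨S, hS⟩ := hV
  exact ⟨insert e S, fun M iM => by
    simp only [hS, Set.forall_mem_insert]
    exact and_comm⟩

theorem IsVariety.of_surjective {V : ∀ M : Type u, L.Structure M → Prop} (hV : IsVariety V)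
    {M N : Type u} [iM : L.Structure M] [iN : L.Structure N] (hM : V M iM)
    (g : M →[L] N) (hg : Function.Surjective g) : V N iN := by
  obtain ⟨S, hS⟩ := hV
  refine (hS N iN).2 fun e he x => ?_
  obtain ⟨y, rfl⟩ := hg.comp_left x
  simp only [HomClass.realize_term, (hS M iM).1 hM e he y]

theorem IsVarietyGeneratedBy.satisfiesDiscrIdentities {V K : ∀ M : Type u, L.Structure M → Prop}
    (hV : IsVarietyGeneratedBy V K) {t : L.Term (Fin 3)}
    (hK : ∀ (M : Type u) (iM : L.Structure M), K M iM → @IsDiscrTermOn L t M iM)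
    {M : Type u} [iM : L.Structure M] (hM : V M iM) : SatisfiesDiscrIdentities t M :=
  fun e he => (hV.2.2 _ (hV.1.and_holds e)
    (fun N iN hN => ⟨hV.2.1 N iN hN, he N iN (hK N iN hN)⟩) M iM hM).2

theorem IsMinimalVariety.eqId_holds {V : ∀ M : Type u, L.Structure M → Prop}
    (hmin : IsMinimalVariety V) (hV : IsVariety V) {e : EqId L}
    {B : Type u} [iB : L.Structure B] [Nontrivial B] (hB : V B iB) (he : e.Holds B)
    {M : Type u} [iM : L.Structure M] (hM : V M iM) : e.Holds M := by
  rcases hmin.2 _ (hV.and_holds e) fun N iN hN => hN.1 with htriv | heq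
  · exact absurd (htriv B iB ⟨hB, he⟩) (not_subsingleton B)
  · exact ((heq M iM).1 hM).2

section Minimal

variable {V : ∀ M : Type u, L.Structure M → Prop} {t : L.Term (Fin 3)}
  (hdisc : ∀ (M : Type u) (iM : L.Structure M), V M iM → @SatisfiesDiscrIdentities L t M iM)
  (hV : IsVariety V)
include hdisc hV

theorem exists_nontrivial_discrOp_eq_left [L.IsAlgebraic] {A : Type u} [iA : L.Structure A]
    [Nonempty A] (hA : V A iA) {k : ℕ} {l r : L.Term (Fin k)}
    (hlr : ∀ x : Fin k → A, l.realize x ≠ r.realize x) :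
    ∃ (B : Type u) (iB : L.Structure B), V B iB ∧ Nontrivial B ∧
      ∀ (x : Fin k → B) (z : B), discrOp t (l.realize x) (r.realize x) z = l.realize x := by
  obtain ⟨μ, hμ⟩ := exists_maximal_isCongruenceAvoiding (L := L) _ _ hlr
  have hB := hV.of_surjective hA _ hμ.prop.1.quotientMk_surjective
  have hmax := hμ.isCongruenceAvoiding_quotient
  refine ⟨_, _, hB, ?_, (hdisc _ _ hB).discrOp_eq_left_of_maximal hmax⟩
  exact nontrivial_of_ne _ _ (hmax.prop.2 fun _ => hμ.prop.1.quotientMk (Classical.arbitrary A))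

variable (hmin : IsMinimalVariety V)
include hmin

theorem subsingleton_of_forall_realize_ne [L.IsAlgebraic] {A : Type u} [iA : L.Structure A]
    [Nonempty A] (hA : V A iA) {k : ℕ} {l r : L.Term (Fin k)}
    (hlr : ∀ x : Fin k → A, l.realize x ≠ r.realize x)
    {D : Type u} [iD : L.Structure D] (hD : V D iD) {d : Fin k → D}
    (hd : l.realize d = r.realize d) : Subsingleton D := by
  obtain ⟨B, iB, hB, hBnt, hBid⟩ := exists_nontrivial_discrOp_eq_left hdisc hV hA hlr
  have hid := hmin.eqId_holds hV hB (e := ⟨k + 1, discrTerm t (l.relabel Fin.castSucc)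
      (r.relabel Fin.castSucc) (Term.var (Fin.last k)), l.relabel Fin.castSucc⟩)
    (fun v => by simpa [Term.realize_relabel] using hBid (v ∘ Fin.castSucc) (v (Fin.last k))) hD
  refine ⟨fun a b => ?_⟩
  have ha := hid (Fin.snoc d a)
  have hb := hid (Fin.snoc d b)
  simp [Term.realize_relabel, hd, (hdisc D iD hD).discrOp_self] at ha hb
  exact ha.trans hb.symm

theorem realize_eq_of_imp_of_nontrivial [L.IsAlgebraic] {A : Type u} [iA : L.Structure A]
    [Nontrivial A] (hA : V A iA) {k : ℕ} {l r u w : L.Term (Fin k)}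
    (hq : ∀ x : Fin k → A, l.realize x = r.realize x → u.realize x = w.realize x)
    {D : Type u} [iD : L.Structure D] (hD : V D iD) {d : Fin k → D}
    (hd : l.realize d = r.realize d) : u.realize d = w.realize d := by
  by_cases hsat : ∃ b : Fin k → A, l.realize b = r.realize b
  · obtain ⟨b, hb⟩ := hsat
    have := hmin.eqId_holds hV hA (e := ⟨k, discrTerm t l r u, discrTerm t l r w⟩)
      (fun a => by simpa using (hdisc A iA hA).discrOp_eq_discrOp_of_imp hq hb a) hD d
    simpa [hd, (hdisc D iD hD).discrOp_self] using this
  · push Not at hsat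
    have := subsingleton_of_forall_realize_ne hdisc hV hmin hA hsat hD hd
    exact Subsingleton.elim _ _

theorem QuasiId.holds_of_holds_nontrivial [L.IsAlgebraic] {A : Type u} [iA : L.Structure A]
    [Nontrivial A] (hA : V A iA) {q : QuasiId L} (hq : q.Holds A)
    {M : Type u} [iM : L.Structure M] (hM : V M iM) : q.Holds M := fun x hx =>
  realize_eq_of_imp_of_nontrivial hdisc hV hmin hA
    (fun y hy => hq y (((hdisc A iA hA).realize_discrPremise_iff q y).1 hy)) hM
    (((hdisc M iM hM).realize_discrPremise_iff q x).2 hx)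

end Minimal

theorem stmt_10 {L : FirstOrder.Language.{u, u}} [L.IsAlgebraic]
    (V : ∀ M : Type u, L.Structure M → Prop)
    (hD : IsDiscriminatorVariety V) (hmin : IsMinimalVariety V) :
    IsMinimalQuasivariety V := by
  obtain ⟨K, t, hK, hgen⟩ := hD
  have hdisc (M : Type u) (iM : L.Structure M) (hM : V M iM) : SatisfiesDiscrIdentities t M :=
    hgen.satisfiesDiscrIdentities hK hM
  refine ⟨hmin.1, fun Q ⟨S, hS⟩ hQV => ?_⟩
  by_cases htriv : ∀ (M : Type u) (iM : L.Structure M), Q M iM → Subsingleton M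
  · exact Or.inl htriv
  push Not at htriv
  obtain ⟨A, iA, hA, hAnt⟩ := htriv
  refine Or.inr fun M iM => ⟨fun hM => (hS M iM).2 fun q hq => ?_, hQV M iM⟩
  exact QuasiId.holds_of_holds_nontrivial hdisc hgen.1 hmin (hQV A iA hA) ((hS A iA).1 hA q hq) hM
end

section
/- Let V be a discriminator variety whose language contains two constants c₀, c₁ such that c₀ ≠ c₁ in the free algebra F of denumerable rank for V. Then V is structurally complete if and only if V is a minimal variety. -/
open FirstOrder Language

universe u

variable {L : FirstOrder.Language.{u, u}}

/-!
On a discriminator algebra the term `switch w p q a b` is `a` where `p = q` and `b` elsewhere, so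
`switch(lhs, rhs, c₀, c₁) ≈ c₁` says that `lhs ≈ rhs` fails, and iterating `switch` rewrites a
quasi-identity as an identity; hence a quasi-identity true in the generating class holds in `V`.

If `V` is structurally complete, the quasi-identity `c₀ ≈ c₁ → x ≈ y` shows that `c₀ ≠ c₁` in
every nontrivial member of `V`. An identity true in a nontrivial `A ∈ V` but false at some point of
a generator `C` makes `switch(lhs, rhs, c₀, c₁) ≈ c₁ → c₀ ≈ c₁` fail in `C`, hence in `F`, and a
homomorphism `F → A` would then force `c₀ = c₁` in `A`. So every nontrivial subvariety contains the
generators.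

Conversely, a quasi-identity true in `F` whose premise has a solution `y` in `F` holds in `V`: the
retraction onto solutions, applied to the free generators and `y`, is a solution in `F` that a
homomorphism sends to any given solution in a generator. If `V` is minimal, a closed identity true
in one nontrivial member holds everywhere, so homomorphisms into nontrivial members are injective on
closed terms; a premise solvable in a nontrivial generator then makes `chain(premise, c₀, c₁) ≈ c₁`
fail in the closed-term subalgebra of `F`, at a point which solves the premise in `F`.
-/

open Substructure

theorem exists_term_realize_of_mem_closure_range {M : Type u} [L.Structure M] {α : Type*}
    {v : α → M} {a : M} (ha : a ∈ closure L (Set.range v)) : ∃ t : L.Term α, t.realize v = a := by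
  obtain ⟨t, rfl⟩ := mem_closure_iff_exists_term.1 ha
  refine ⟨t.relabel fun x => x.2.choose, ?_⟩
  rw [Term.realize_relabel]
  exact congrArg t.realize (funext fun x => x.2.choose_spec)

theorem monotone_closure_range_fin {M : Type u} [L.Structure M] (g : ℕ → M) :
    Monotone fun m => closure L (Set.range fun i : Fin m => g i) := fun _ _ h =>
  closure_mono <| by rintro _ ⟨i, rfl⟩; exact ⟨Fin.castLE h i, rfl⟩

section Varieties

variable {V K : ∀ M : Type u, L.Structure M → Prop} {M : Type u} [iM : L.Structure M]

theorem IsVarietyGeneratedBy.holds (hG : IsVarietyGeneratedBy V K) {e : EqId L}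
    (he : ∀ (C : Type u) (iC : L.Structure C), K C iC → @EqId.Holds L e C iC) (hM : V M iM) :
    e.Holds M :=
  hG.2.2 (fun N iN => @EqId.Holds L e N iN) ⟨{e}, by simp⟩ he M iM hM

theorem EqId.Holds.substructure {e : EqId L} (he : e.Holds M) (S : L.Substructure M) :
    e.Holds S := fun x =>
  S.subtype_injective <| by simp only [← HomClass.realize_term]; exact he _

theorem IsVariety.substructure (hV : IsVariety V) (hM : V M iM) (S : L.Substructure M) :
    V S inferInstance := by
  obtain ⟨T, hT⟩ := hV
  exact (hT _ _).2 fun e he => ((hT M iM).1 hM e he).substructure S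

theorem IsMinimalVariety.holds_of_nontrivial (hmin : IsMinimalVariety V) (hV : IsVariety V)
    [Nontrivial M] (hM : V M iM) {e : EqId L} (he : e.Holds M)
    {N : Type u} {iN : L.Structure N} (hN : V N iN) : @EqId.Holds L e N iN := by
  obtain ⟨T, hT⟩ := hV
  have hV' : IsVariety fun N iN => V N iN ∧ @EqId.Holds L e N iN :=
    ⟨insert e T, fun N iN => by simp [hT N iN, and_comm]⟩
  rcases hmin.2 _ hV' fun N iN h => h.1 with htriv | hall
  · exact absurd (htriv M iM ⟨hM, he⟩) (not_subsingleton M)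
  · exact ((hall N iN).1 hN).2

theorem IsMinimalVariety.injOn_bot (hmin : IsMinimalVariety V) (hV : IsVariety V)
    (hM : V M iM) {N : Type u} {iN : L.Structure N} [Nontrivial N] (hN : V N iN)
    (φ : M →[L] N) : Set.InjOn φ (⊥ : L.Substructure M) := by
  intro a ha b hb hab
  rw [SetLike.mem_coe, ← Substructure.closure_empty,
    ← Set.range_eq_empty (Fin.elim0 : Fin 0 → M)] at ha hb
  obtain ⟨s, rfl⟩ := exists_term_realize_of_mem_closure_range ha
  obtain ⟨t, rfl⟩ := exists_term_realize_of_mem_closure_range hb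
  have he : (⟨0, s, t⟩ : EqId L).Holds N := fun x => by
    rw [Subsingleton.elim x (φ ∘ Fin.elim0)]
    simpa only [HomClass.realize_term] using hab
  exact hmin.holds_of_nontrivial hV hN he hM _

end Varieties

section Free

variable {V K : ∀ M : Type u, L.Structure M → Prop} {F : Type u} [iF : L.Structure F] {g : ℕ → F}

theorem IsFreeAlgOn.exists_hom (hF : IsFreeAlgOn V F g) {A : Type u} [iA : L.Structure A]
    [Nonempty A] (hA : V A iA) {m : ℕ} (x : Fin m → A) :
    ∃ φ : F →[L] A, ∀ i : Fin m, φ (g i) = x i := by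
  classical
  obtain ⟨φ, hφ, -⟩ :=
    hF.2.2 A iA hA fun n => if h : n < m then x ⟨n, h⟩ else Classical.arbitrary A
  exact ⟨φ, fun i => (hφ i).trans (dif_pos i.2)⟩

theorem IsFreeAlgOn.exists_mem_closure (hF : IsFreeAlgOn V F g) (hV : IsVariety V) (a : F) :
    ∃ m : ℕ, a ∈ closure L (Set.range fun i : Fin m => g i) := by
  set T := ⨆ m : ℕ, closure L (Set.range fun i : Fin m => g i)
  have hgT : ∀ n, g n ∈ T := fun n =>
    le_iSup (fun m : ℕ => closure L (Set.range fun i : Fin m => g i)) (n + 1)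
      (subset_closure ⟨⟨n, n.lt_succ_self⟩, rfl⟩)
  obtain ⟨φ, hφ, -⟩ := hF.2.2 T inferInstance (hV.substructure hF.1 T) fun n => ⟨g n, hgT n⟩
  have hid : T.subtype.toHom.comp φ = Hom.id L F :=
    (hF.2.2 F iF hF.1 g).unique (fun n => congrArg Subtype.val (hφ n)) fun _ => rfl
  have ha : a ∈ T := by
    rw [← show (φ a : F) = a from DFunLike.congr_fun hid a]
    exact (φ a).2
  exact (mem_iSup_of_directed (monotone_closure_range_fin g).directed_le).1 ha

theorem IsFreeAlgOn.eq_of_forall_hom_eq (hF : IsFreeAlgOn V F g) (hG : IsVarietyGeneratedBy V K)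
    {a b : F} (h : ∀ (D : Type u) (iD : L.Structure D), K D iD → ∀ φ : F →[L] D, φ a = φ b) :
    a = b := by
  obtain ⟨m, ha⟩ := hF.exists_mem_closure hG.1 a
  obtain ⟨m', hb⟩ := hF.exists_mem_closure hG.1 b
  obtain ⟨s, rfl⟩ := exists_term_realize_of_mem_closure_range
    (monotone_closure_range_fin g (le_max_left m m') ha)
  obtain ⟨t, rfl⟩ := exists_term_realize_of_mem_closure_range
    (monotone_closure_range_fin g (le_max_right m m') hb)
  refine hG.holds (e := ⟨max m m', s, t⟩) (fun D iD hD x => ?_) hF.1 _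
  have : Nonempty D := ⟨s.realize x⟩
  obtain ⟨φ, hφ⟩ := hF.exists_hom (hG.2.1 D iD hD) x
  have hx : x = φ ∘ fun i : Fin (max m m') => g i := funext fun i => (hφ i).symm
  change s.realize x = t.realize x
  rw [hx, HomClass.realize_term, HomClass.realize_term]
  exact h D iD hD φ

end Free

def IsMalcevTermOn (w : L.Term (Fin 3)) (M : Type u) [L.Structure M] : Prop :=
  ∀ a b : M, w.realize ![a, a, b] = b ∧ w.realize ![a, b, b] = a

theorem IsDiscrTermOn.isMalcevTermOn {w : L.Term (Fin 3)} {M : Type u} [L.Structure M]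
    (hw : IsDiscrTermOn w M) : IsMalcevTermOn w M := by
  refine fun a b => ⟨(hw a a b).2 rfl, ?_⟩
  by_cases h : a = b
  · rw [(hw a b b).2 h, h]
  · exact (hw a b b).1 h

section Switch

variable (w : L.Term (Fin 3)) {α : Type*}

theorem realize_subst_vec3 {M : Type u} [L.Structure M] (a b c : L.Term α) (v : α → M) :
    (w.subst ![a, b, c]).realize v = w.realize ![a.realize v, b.realize v, c.realize v] := by
  rw [Term.realize_subst]
  congr 1
  funext i
  fin_cases i <;> rfl

theorem isMalcevTermOn_of_mem {V K : ∀ M : Type u, L.Structure M → Prop}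
    (hK : ∀ (C : Type u) (iC : L.Structure C), K C iC → @IsDiscrTermOn L w C iC)
    (hG : IsVarietyGeneratedBy V K) {M : Type u} {iM : L.Structure M} (hM : V M iM) :
    IsMalcevTermOn w M := by
  have transfer : ∀ i j k l : Fin 2,
      (∀ (C : Type u) (iC : L.Structure C), K C iC →
        ∀ x : Fin 2 → C, w.realize ![x i, x j, x k] = x l) →
      ∀ x : Fin 2 → M, w.realize ![x i, x j, x k] = x l := fun i j k l hK' x => by
    have := hG.holds (e := ⟨2, w.subst ![.var i, .var j, .var k], .var l⟩)
      (fun C iC hC y => (realize_subst_vec3 w _ _ _ y).trans (hK' C iC hC y)) hM x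
    exact (realize_subst_vec3 w _ _ _ x).symm.trans this
  intro a b
  exact ⟨transfer 0 0 1 1 (fun C iC hC x => ((hK C iC hC).isMalcevTermOn _ _).1) ![a, b],
    transfer 0 1 1 0 (fun C iC hC x => ((hK C iC hC).isMalcevTermOn _ _).2) ![a, b]⟩

/-- On discriminator algebras, `switch w p q a b` is `a` where `p = q` and `b` elsewhere. -/
def switch (p q a b : L.Term α) : L.Term α :=
  w.subst ![w.subst ![p, q, a], w.subst ![p, q, b], b]

def chain : {n : ℕ} → (Fin n → L.Term α) → (Fin n → L.Term α) → L.Term α → L.Term α → L.Term α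
  | 0, _, _, a, _ => a
  | _ + 1, s, t, a, b => switch w (s 0) (t 0) (chain (Fin.tail s) (Fin.tail t) a b) b

variable {w} {M : Type u} [L.Structure M] {v : α → M}

theorem realize_switch_of_eq (hw : IsMalcevTermOn w M) {p q a b : L.Term α}
    (h : p.realize v = q.realize v) : (switch w p q a b).realize v = a.realize v := by
  simp only [switch, realize_subst_vec3, h, (hw _ _).1, (hw _ _).2]

theorem realize_switch_of_ne (hw : IsDiscrTermOn w M) {p q a b : L.Term α}
    (h : p.realize v ≠ q.realize v) : (switch w p q a b).realize v = b.realize v := by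
  simp only [switch, realize_subst_vec3, (hw _ _ _).1 h, (hw.isMalcevTermOn _ _).1]

theorem realize_chain_of_forall_eq (hw : IsMalcevTermOn w M) {n : ℕ} {s t : Fin n → L.Term α}
    {a b : L.Term α} (h : ∀ i, (s i).realize v = (t i).realize v) :
    (chain w s t a b).realize v = a.realize v := by
  induction n with
  | zero => rfl
  | succ n ih =>
    rw [chain, realize_switch_of_eq hw (h 0)]
    exact ih fun i => h i.succ

theorem realize_chain_of_exists_ne (hw : IsDiscrTermOn w M) {n : ℕ} {s t : Fin n → L.Term α}
    {a b : L.Term α} (h : ∃ i, (s i).realize v ≠ (t i).realize v) :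
    (chain w s t a b).realize v = b.realize v := by
  induction n with
  | zero => exact h.choose.elim0
  | succ n ih =>
    by_cases h0 : (s 0).realize v = (t 0).realize v
    · rw [chain, realize_switch_of_eq hw.isMalcevTermOn h0]
      obtain ⟨i, hi⟩ := h
      cases i using Fin.cases with
      | zero => exact absurd h0 hi
      | succ j => exact ih ⟨j, hi⟩
    · rw [chain, realize_switch_of_ne hw h0]

end Switch

section Retraction

variable (w : L.Term (Fin 3)) {k n : ℕ}

/-- On discriminator algebras, `(retraction w s t j)(x, z)` is `x j` if `x` solves the equations
`s i = t i`, and `z j` otherwise. -/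
def retraction (s t : Fin n → L.Term (Fin k)) (j : Fin k) : L.Term (Fin k ⊕ Fin k) :=
  chain w (fun i => (s i).relabel Sum.inl) (fun i => (t i).relabel Sum.inl)
    (.var (.inl j)) (.var (.inr j))

variable {w} {M : Type u} [L.Structure M] {s t : Fin n → L.Term (Fin k)}

theorem realize_retraction_of_forall_eq (hw : IsMalcevTermOn w M) {x z : Fin k → M}
    (hx : ∀ i, (s i).realize x = (t i).realize x) (j : Fin k) :
    (retraction w s t j).realize (Sum.elim x z) = x j :=
  realize_chain_of_forall_eq hw fun i => by simpa [Term.realize_relabel] using hx i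

theorem forall_realize_retraction (hw : IsDiscrTermOn w M) (x : Fin k → M) {z : Fin k → M}
    (hz : ∀ i, (s i).realize z = (t i).realize z) (i : Fin n) :
    (s i).realize (fun j => (retraction w s t j).realize (Sum.elim x z)) =
      (t i).realize (fun j => (retraction w s t j).realize (Sum.elim x z)) := by
  by_cases hx : ∀ i, (s i).realize x = (t i).realize x
  · simpa only [realize_retraction_of_forall_eq hw.isMalcevTermOn hx] using hx i
  · push Not at hx
    have : (fun j => (retraction w s t j).realize (Sum.elim x z)) = z := funext fun j =>
      realize_chain_of_exists_ne hw (by simpa [Term.realize_relabel] using hx)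
    rw [this]
    exact hz i

end Retraction

section StructurallyComplete

variable {V K : ∀ M : Type u, L.Structure M → Prop} {w : L.Term (Fin 3)}
  {F : Type u} [iF : L.Structure F] {g : ℕ → F} {c₀ c₁ : L.Constants}

theorem IsSC.subsingleton_of_constants_eq (hSC : IsSC V F) (hc : (c₀ : F) ≠ c₁)
    {N : Type u} {iN : L.Structure N} (hN : V N iN) (hcN : (c₀ : N) = c₁) : Subsingleton N := by
  have hq : (⟨2, 1, fun _ => c₀.term, fun _ => c₁.term, .var 0, .var 1⟩ : QuasiId L).Holds F :=
    fun _ h => absurd (by simpa using h 0) hc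
  exact ⟨fun a b => hSC _ hq N iN hN ![a, b] fun _ => by simpa using hcN⟩

theorem IsSC.holds_of_holds_of_nontrivial (hSC : IsSC V F) (hc : (c₀ : F) ≠ c₁)
    (hK : ∀ (C : Type u) (iC : L.Structure C), K C iC → @IsDiscrTermOn L w C iC)
    (hG : IsVarietyGeneratedBy V K) (hF : IsFreeAlgOn V F g)
    {A : Type u} {iA : L.Structure A} [Nontrivial A] (hA : V A iA) {e : EqId L}
    (he : e.Holds A) {C : Type u} {iC : L.Structure C} (hC : K C iC) : e.Holds C := by
  intro z
  by_contra hz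
  have hcC : (c₀ : C) ≠ c₁ := fun h =>
    hz (@Subsingleton.elim _ (hSC.subsingleton_of_constants_eq hc (hG.2.1 C iC hC) h) _ _)
  let q : QuasiId L :=
    ⟨e.k, 1, fun _ => switch w e.lhs e.rhs c₀.term c₁.term, fun _ => c₁.term, c₀.term, c₁.term⟩
  have hqC : ¬ q.Holds C := fun hq => hcC <| by
    simpa [q] using hq z fun _ => by simp [q, realize_switch_of_ne (hK C iC hC) hz]
  obtain ⟨y, hy, -⟩ : ∃ y : Fin e.k → F, (∀ i, (q.lhs i).realize y = (q.rhs i).realize y) ∧ _ := by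
    simpa [QuasiId.Holds] using mt (hSC q · C iC (hG.2.1 C iC hC)) hqC
  obtain ⟨φ, -⟩ := hF.exists_hom hA (m := 0) Fin.elim0
  have hyA := congrArg φ (hy 0)
  simp only [q, ← HomClass.realize_term, Term.realize_constants, HomClass.map_constants,
    realize_switch_of_eq (isMalcevTermOn_of_mem w hK hG hA) (he (φ ∘ y))] at hyA
  exact not_subsingleton A (hSC.subsingleton_of_constants_eq hc hA hyA)

theorem IsSC.isMinimalVariety (hSC : IsSC V F) (hc : (c₀ : F) ≠ c₁)
    (hK : ∀ (C : Type u) (iC : L.Structure C), K C iC → @IsDiscrTermOn L w C iC)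
    (hG : IsVarietyGeneratedBy V K) (hF : IsFreeAlgOn V F g) : IsMinimalVariety V := by
  refine ⟨⟨F, iF, hF.1, ⟨_, _, hc⟩⟩, fun V' ⟨T, hT⟩ hV'V => ?_⟩
  by_cases htriv : ∀ (N : Type u) (iN : L.Structure N), V' N iN → Subsingleton N
  · exact Or.inl htriv
  push Not at htriv
  obtain ⟨A, iA, hA, _⟩ := htriv
  have hKV' : SubclassOf K V' := fun C iC hC => (hT C iC).2 fun e he =>
    hSC.holds_of_holds_of_nontrivial hc hK hG hF (hV'V A iA hA) ((hT A iA).1 hA e he) hC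
  exact Or.inr fun N iN => ⟨hG.2.2 V' ⟨T, hT⟩ hKV' N iN, hV'V N iN⟩

end StructurallyComplete

section MinimalVariety

variable {V K : ∀ M : Type u, L.Structure M → Prop} {w : L.Term (Fin 3)}
  {F : Type u} [iF : L.Structure F] {g : ℕ → F} {c₀ c₁ : L.Constants}

theorem QuasiId.holds_of_forall_discr
    (hK : ∀ (C : Type u) (iC : L.Structure C), K C iC → @IsDiscrTermOn L w C iC)
    (hG : IsVarietyGeneratedBy V K) {q : QuasiId L}
    (hq : ∀ (C : Type u) (iC : L.Structure C), K C iC → @QuasiId.Holds L q C iC)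
    {M : Type u} {iM : L.Structure M} (hM : V M iM) : q.Holds M := by
  have he : (⟨q.k, chain w q.lhs q.rhs q.cl q.cr, q.cr⟩ : EqId L).Holds M :=
    hG.holds (fun C iC hC x => by
      by_cases hx : ∀ i, (q.lhs i).realize x = (q.rhs i).realize x
      · exact (realize_chain_of_forall_eq (hK C iC hC).isMalcevTermOn hx).trans (hq C iC hC x hx)
      · push Not at hx
        exact realize_chain_of_exists_ne (hK C iC hC) hx) hM
  intro x hx
  exact (realize_chain_of_forall_eq (isMalcevTermOn_of_mem w hK hG hM) hx).symm.trans (he x)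

theorem isASC_of_isDiscrTermOn
    (hK : ∀ (C : Type u) (iC : L.Structure C), K C iC → @IsDiscrTermOn L w C iC)
    (hG : IsVarietyGeneratedBy V K) (hF : IsFreeAlgOn V F g) : IsASC V F := by
  rintro q hqF ⟨y, hy⟩ M iM hM
  refine QuasiId.holds_of_forall_discr hK hG (fun C iC hC x₀ hx₀ => ?_) hM
  let G : Fin q.k → F := fun j => g j
  -- a solution of the premise in `F` that a homomorphism sends to `x₀`
  let u : Fin q.k → F := fun j => (retraction w q.lhs q.rhs j).realize (Sum.elim G y)
  have hcomp : ∀ {D : Type u} [L.Structure D] (φ : F →[L] D),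
      φ ∘ u = fun j => (retraction w q.lhs q.rhs j).realize (Sum.elim (φ ∘ G) (φ ∘ y)) :=
    fun φ => funext fun j => by simp [u, ← HomClass.realize_term, Sum.comp_elim]
  have hu : ∀ i, (q.lhs i).realize u = (q.rhs i).realize u := fun i =>
    hF.eq_of_forall_hom_eq hG fun D iD hD φ => by
      rw [← HomClass.realize_term, ← HomClass.realize_term, hcomp]
      exact forall_realize_retraction (hK D iD hD) _
        (fun i => by rw [HomClass.realize_term, HomClass.realize_term, hy i]) i
  have : Nonempty C := ⟨q.cl.realize x₀⟩
  obtain ⟨φ, hφ⟩ := hF.exists_hom (hG.2.1 C iC hC) x₀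
  have hφu : φ ∘ u = x₀ := by
    rw [hcomp, show φ ∘ G = x₀ from funext hφ]
    exact funext (realize_retraction_of_forall_eq (hK C iC hC).isMalcevTermOn hx₀)
  rw [← hφu, HomClass.realize_term, HomClass.realize_term, hqF u hu]

theorem QuasiId.premiseSat_of_isMinimalVariety (hmin : IsMinimalVariety V)
    (hK : ∀ (C : Type u) (iC : L.Structure C), K C iC → @IsDiscrTermOn L w C iC)
    (hG : IsVarietyGeneratedBy V K) (hF : IsFreeAlgOn V F g) (hc : (c₀ : F) ≠ c₁)
    {q : QuasiId L} {C : Type u} {iC : L.Structure C} [Nontrivial C] (hC : K C iC)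
    {x₀ : Fin q.k → C} (hx₀ : ∀ i, (q.lhs i).realize x₀ = (q.rhs i).realize x₀) :
    q.PremiseSat F := by
  have hCV := hG.2.1 C iC hC
  obtain ⟨φ, -⟩ := hF.exists_hom hCV (m := 0) Fin.elim0
  have hcC : (c₀ : C) ≠ c₁ := by
    simpa using (hmin.injOn_bot hG.1 hF.1 hCV φ).ne (constants_mem c₀) (constants_mem c₁) hc
  -- on generators where `c₀ ≠ c₁`, `e` says that the premise of `q` has no solution
  let e : EqId L := ⟨q.k, chain w q.lhs q.rhs c₀.term c₁.term, c₁.term⟩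
  have heC : ¬ e.Holds C := fun he => hcC <| by
    simpa [e, realize_chain_of_forall_eq (hK C iC hC).isMalcevTermOn hx₀] using he x₀
  have : Nontrivial (⊥ : L.Substructure F) :=
    ⟨⟨c₀, constants_mem c₀⟩, ⟨c₁, constants_mem c₁⟩, fun h => hc (congrArg Subtype.val h)⟩
  obtain ⟨y, hy⟩ := not_forall.1 <|
    mt (hmin.holds_of_nontrivial hG.1 (hG.1.substructure hF.1 ⊥) · hCV) heC
  obtain ⟨y, hyS, hy⟩ : ∃ y : Fin q.k → F, (∀ j, y j ∈ (⊥ : L.Substructure F)) ∧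
      e.lhs.realize y ≠ e.rhs.realize y := by
    refine ⟨Substructure.subtype ⊥ ∘ y, fun j => (y j).2, ?_⟩
    rw [HomClass.realize_term, HomClass.realize_term]
    exact (subtype_injective _).ne hy
  refine ⟨y, fun i => hF.eq_of_forall_hom_eq hG fun D iD hD ψ => ?_⟩
  rcases subsingleton_or_nontrivial D with _ | _
  · exact Subsingleton.elim _ _
  by_contra hne
  rw [← HomClass.realize_term, ← HomClass.realize_term] at hne
  have hchain := realize_chain_of_exists_ne (hK D iD hD) ⟨i, hne⟩ (a := c₀.term) (b := c₁.term)
  rw [HomClass.realize_term, HomClass.realize_term] at hchain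
  exact hy <| hmin.injOn_bot hG.1 hF.1 (hG.2.1 D iD hD) ψ
    (Term.realize_mem _ _ hyS) (Term.realize_mem _ _ hyS) hchain

theorem IsMinimalVariety.isSC (hmin : IsMinimalVariety V)
    (hK : ∀ (C : Type u) (iC : L.Structure C), K C iC → @IsDiscrTermOn L w C iC)
    (hG : IsVarietyGeneratedBy V K) (hF : IsFreeAlgOn V F g) (hc : (c₀ : F) ≠ c₁) :
    IsSC V F := by
  refine fun q hqF M iM hM => QuasiId.holds_of_forall_discr hK hG (fun C iC hC x₀ hx₀ => ?_) hM
  rcases subsingleton_or_nontrivial C with _ | _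
  · exact Subsingleton.elim _ _
  exact isASC_of_isDiscrTermOn hK hG hF q hqF
    (q.premiseSat_of_isMinimalVariety hmin hK hG hF hc hC hx₀) C iC (hG.2.1 C iC hC) x₀ hx₀

end MinimalVariety

theorem stmt_12_general {L : FirstOrder.Language.{u, u}}
    (V : ∀ M : Type u, L.Structure M → Prop) (hD : IsDiscriminatorVariety V)
    (F : Type u) [iF : L.Structure F] (g : ℕ → F) (hF : IsFreeAlgOn V F g)
    (c₀ c₁ : L.Constants)
    (hc : Structure.funMap c₀ (Fin.elim0 : Fin 0 → F) ≠
      Structure.funMap c₁ (Fin.elim0 : Fin 0 → F)) :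
    IsSC V F ↔ IsMinimalVariety V := by
  obtain ⟨K, w, hK, hG⟩ := hD
  rw [funMap_eq_coe_constants, funMap_eq_coe_constants] at hc
  exact ⟨fun hSC => hSC.isMinimalVariety hc hK hG hF, fun hmin => hmin.isSC hK hG hF hc⟩

theorem stmt_12 {L : FirstOrder.Language.{u, u}} [L.IsAlgebraic]
    (V : ∀ M : Type u, L.Structure M → Prop) (hD : IsDiscriminatorVariety V)
    (F : Type u) [iF : L.Structure F] (g : ℕ → F) (hF : IsFreeAlgOn V F g)
    (c₀ c₁ : L.Constants)
    (hc : Structure.funMap c₀ (Fin.elim0 : Fin 0 → F) ≠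
      Structure.funMap c₁ (Fin.elim0 : Fin 0 → F)) :
    IsSC V F ↔ IsMinimalVariety V :=
  stmt_12_general V hD F (iF := iF) g hF c₀ c₁ hc
end

section
/- In the variety W of algebras with countably many unary operations f_i (i ∈ ℕ) satisfying f_i(f_j(x)) = f_j(f_i(x)) and f_i(f_i(x)) = f_i(x) for all i,j, let F be a free algebra of rank at least 1, take u ∈ F, and define ū ∈ F^ℕ by ū(i) = f_{i-1}(f_{i-2}(⋯f_0(u)⋯)) (with ū(0)=u). Then for any non-principal ultrafilter U on ℕ, the class ū/U is an idempotent element of the ultrapower F^ℕ/U, i.e., f_i(ū/U) = ū/U for every i. -/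
open FirstOrder

/-- The language with countably many unary operation symbols `f_i`, `i : ℕ`. -/
def LW : FirstOrder.Language.{0, 0} :=
  ⟨fun m => match m with | 1 => ℕ | _ => Empty, fun _ => Empty⟩

instance : LW.IsAlgebraic := fun _ => inferInstanceAs (IsEmpty Empty)

/-- The interpretation of the unary operation symbol `f_i` in an `LW`-algebra. -/
def fop {M : Type} [LW.Structure M] (i : ℕ) (x : M) : M :=
  Language.Structure.funMap (L := LW) (n := 1) (show LW.Functions 1 from i) ![x]

/-- The variety `W` axiomatized by `f_i (f_j x) = f_j (f_i x)` and `f_i (f_i x) = f_i x`. -/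
def Wclass : ∀ M : Type, LW.Structure M → Prop := fun M iM =>
  ∀ (i j : ℕ) (x : M),
    @fop M iM i (@fop M iM j x) = @fop M iM j (@fop M iM i x) ∧
      @fop M iM i (@fop M iM i x) = @fop M iM i x

/-- in the variety `W`, if `F` is a free algebra of rank at least 1, `u ∈ F`, and
`ū : ℕ → F` is given by `ū 0 = u`, `ū (i+1) = f_i (ū i)`, then for any non-principal ultrafilter
`U` on `ℕ`, the class of `ū` in the ultrapower `F^ℕ/U` is an idempotent element, i.e. it is fixed
by every `f_i`. -/
theorem stmt_13 (F : Type) [iF : LW.Structure F] (hW : Wclass F iF)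
    (α : Type) [Nonempty α] (g : α → F) (hg : Function.Injective g)
    (hfree : ∀ (A : Type) (iA : LW.Structure A), Wclass A iA → ∀ f : α → A,
      ∃! h : @FirstOrder.Language.Hom LW F A iF iA, ∀ a, h.toFun (g a) = f a)
    (u : F) (ub : ℕ → F) (h0 : ub 0 = u) (hs : ∀ i, ub (i + 1) = fop i (ub i))
    (U : Ultrafilter ℕ) (hU : ∀ a : ℕ, (U : Filter ℕ) ≠ pure a) :
    ∀ i : ℕ,
      fop i (Quotient.mk ((U : Filter ℕ).productSetoid fun _ : ℕ => F) ub) =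
        Quotient.mk ((U : Filter ℕ).productSetoid fun _ : ℕ => F) ub := by
  intro i
  -- pointwise fixing on a cofinite set
  have key : ∀ n, ∀ j < n, fop j (ub n) = ub n := by
    intro n
    induction n with
    | zero => intro j hj; exact absurd hj (Nat.not_lt_zero j)
    | succ n ih =>
      intro j hj
      rcases Nat.lt_succ_iff_lt_or_eq.mp hj with h | h
      · rw [hs n, (hW j n (ub n)).1, ih j h]
      · rw [h, hs n, (hW n n (ub n)).2]
  have hcof : (U : Filter ℕ) ≤ Filter.cofinite := by
    rcases U.le_cofinite_or_eq_pure with h | ⟨a, ha⟩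
    · exact h
    · exact absurd (by rw [ha]; rfl) (hU a)
  letI := (U : Filter ℕ).productSetoid fun _ : ℕ => F
  letI := FirstOrder.Language.Ultraproduct.setoidPrestructure (L := LW) (fun _ : ℕ => F) U
  have hquot := FirstOrder.Language.funMap_quotient_mk'
    ((U : Filter ℕ).productSetoid fun _ : ℕ => F)
    (show LW.Functions 1 from i) (x := ![ub])
  have harg : (fun k : Fin 1 =>
      (⟦(![ub] : Fin 1 → (ℕ → F)) k⟧ : Quotient ((U : Filter ℕ).productSetoid fun _ : ℕ => F)))
      = ![⟦ub⟧] := by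
    funext k
    refine Fin.cases ?_ (fun k => k.elim0) k
    rfl
  rw [harg] at hquot
  show Language.Structure.funMap (show LW.Functions 1 from i) ![⟦ub⟧] = ⟦ub⟧
  rw [hquot]
  refine Quotient.sound ?_
  have hsub : {n : ℕ | i < n} ⊆
      {n : ℕ | Language.Structure.funMap (show LW.Functions 1 from i)
        (fun k : Fin 1 => (![ub] : Fin 1 → (ℕ → F)) k n) = ub n} := by
    intro n hn
    have : (fun k : Fin 1 => (![ub] : Fin 1 → (ℕ → F)) k n) = ![ub n] := by
      funext k; refine Fin.cases ?_ (fun k => k.elim0) k; rfl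
    simp only [Set.mem_setOf_eq, this]
    exact key n i hn
  exact Filter.mem_of_superset (hcof (Filter.eventually_cofinite.mpr
    (Set.Finite.subset (Set.finite_Iic i) (fun n hn => by
      simpa using Nat.le_of_not_lt hn)))) hsub
end
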